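/- arXiv:math/0701096 — 4 statements merged into one kernel-verified Lean document; each statement's English description precedes it below -/
import Mathlib

section
/- Fix S, T ⊆ [n] with |S| = |T|. Then the cardinality of P_n(S,T) equals ∏_{i ∉ T} h(i), where h(i) = |T ∩ {i+1,…,n}| − |S ∩ {i+1,…,n}|. -/
open Finset
open scoped Classical

/-- descents of a list: number of positions i with l_i > l_{i+1} -/
def desList (l : List ℕ) : ℕ := ((l.zip l.tail).filter (fun p => p.2 < p.1)).length

/-- major index of a list (1-based positions) -/
def majList (l : List ℕ) : ℕ :=
  ∑ i ∈ Finset.range (l.length - 1), if l.getD (i+1) 0 < l.getD i 0 then i + 1 else 0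

/-- inversion number of a list -/
def invList (l : List ℕ) : ℕ :=
  ((Finset.range l.length ×ˢ Finset.range l.length).filter
    (fun p => p.1 < p.2 ∧ l.getD p.2 0 < l.getD p.1 0)).card

/-- number of 2-crossings of an arc set -/
def cr2 {α : Type*} [LinearOrder α] (A : Finset (α × α)) : ℕ :=
  ((A ×ˢ A).filter (fun p => p.1.1 < p.2.1 ∧ p.2.1 < p.1.2 ∧ p.1.2 < p.2.2)).card

/-- the label of an arc: arcs are labeled 1,…,k from right to left by left-hand endpoints -/
def labelArc {α : Type*} [LinearOrder α] (A : Finset (α × α)) (e : α × α) : ℕ :=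
  (A.filter (fun f => e.1 < f.1)).card + 1

/-- p-major index of an arc set: process endpoints in decreasing order, maintaining the
sequence σ of (arcs corresponding to) labels; at a left endpoint delete its arc, at a
right endpoint prepend the arc ending there and add the number of descents of the
label sequence σ. -/
noncomputable def pmajArcs {α : Type*} [LinearOrder α] (A : Finset (α × α)) : ℕ :=
  (((((A.image Prod.fst) ∪ (A.image Prod.snd)).sort (· ≤ ·)).reverse).foldl
    (fun (st : List (α × α) × ℕ) i =>
      let σ₁ := st.1.filter (fun e => e.1 ≠ i)
      let ends := (A.filter (fun e => e.2 = i)).toList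
      let σ₂ := ends ++ σ₁
      (σ₂, st.2 + if ends.isEmpty then 0 else desList (σ₂.map (labelArc A))))
    ([], 0)).2

/-- arcs of the standard representation of a partition of [n] = {1,…,n}:
pairs of consecutive elements of a block -/
noncomputable def arcsOf {n : ℕ} (P : Finpartition (Finset.Icc 1 n)) : Finset (ℕ × ℕ) :=
  ((Finset.Icc 1 n) ×ˢ (Finset.Icc 1 n)).filter (fun e =>
    e.1 < e.2 ∧ ∃ B ∈ P.parts, e.1 ∈ B ∧ e.2 ∈ B ∧ ∀ k ∈ B, e.1 < k → k < e.2 → False)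

/-- the set of minimal block elements of a partition of [n] -/
noncomputable def minsetOf {n : ℕ} (P : Finpartition (Finset.Icc 1 n)) : Finset ℕ :=
  (Finset.Icc 1 n).filter (fun i => ∃ B ∈ P.parts, i ∈ B ∧ ∀ j ∈ B, i ≤ j)

/-- the set of maximal block elements of a partition of [n] -/
noncomputable def maxsetOf {n : ℕ} (P : Finpartition (Finset.Icc 1 n)) : Finset ℕ :=
  (Finset.Icc 1 n).filter (fun i => ∃ B ∈ P.parts, i ∈ B ∧ ∀ j ∈ B, j ≤ i)

noncomputable instance finpartitionFintype (s : Finset ℕ) : Fintype (Finpartition s) := by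
  apply Fintype.ofInjective
    (fun P : Finpartition s =>
      (⟨P.parts, by
        simp only [Finset.mem_powerset]
        intro t ht
        exact Finset.mem_powerset.2 (P.le ht)⟩ : {t // t ∈ s.powerset.powerset}))
  intro P Q h
  have : P.parts = Q.parts := congrArg Subtype.val h
  cases P; cases Q; simpa using this

/-- P_n(S,T): partitions of [n] with block minima S and block maxima T -/
noncomputable def pnST (n : ℕ) (S T : Finset ℕ) : Finset (Finpartition (Finset.Icc 1 n)) :=
  Finset.univ.filter (fun P => minsetOf P = S ∧ maxsetOf P = T)

/-- h(i) = |T ∩ {i+1,…,n}| − |S ∩ {i+1,…,n}| -/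
def hST (n : ℕ) (S T : Finset ℕ) (i : ℕ) : ℕ :=
  (T ∩ Finset.Icc (i+1) n).card - (S ∩ Finset.Icc (i+1) n).card

/-!
The arcs of a partition (pairs of consecutive elements of a block) determine it: its blocks are the
connected components of the arc graph. For a partition with block minima `S` and block maxima `T`
the arcs form the graph of a bijection `f : [n] \ T → [n] \ S` with `i < f i`. Conversely, the
components of such a graph are increasing chains (each point has at most one arc in and one arc
out), so taking them as blocks gives a partition with these minima, maxima and arcs.
Such bijections `D → R` are counted by first choosing the image of `m = max D`: there are
`#{r ∈ R | m < r}` choices, and deleting the pair lowers both counts in every other factor by one.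
-/

namespace Relation

variable {α : Type*} {r : α → α → Prop} {a b : α}

theorem eqvGen_iff_reflTransGen_or (hl : Relator.LeftUnique r) (hr : Relator.RightUnique r) :
    EqvGen r a b ↔ ReflTransGen r a b ∨ ReflTransGen r b a := by
  refine ⟨fun h ↦ ?_, fun h ↦ h.elim (EqvGen.reflTransGen_le_eqvGen r _ _) fun h ↦
    (EqvGen.reflTransGen_le_eqvGen r _ _ h).symm⟩
  induction h with
  | rel _ _ h => exact .inl (.single h)
  | refl => exact .inl .refl
  | symm _ _ _ ih => exact ih.symm
  | trans x y z _ _ ihxy ihyz =>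
    rcases ihxy with hxy | hyx <;> rcases ihyz with hyz | hzy
    · exact .inl (hxy.trans hyz)
    · -- `x` and `z` both reach `y`, and predecessors are unique
      simpa only [reflTransGen_swap, or_comm] using
        ReflTransGen.total_of_right_unique (r := Function.swap r) hl.flip
          (reflTransGen_swap.2 hxy) (reflTransGen_swap.2 hzy)
    · exact ReflTransGen.total_of_right_unique hr hyx hyz
    · exact .inr (hzy.trans hyx)

theorem ReflTransGen.le_of_lt [Preorder α] (hlt : ∀ a b, r a b → a < b)
    (h : ReflTransGen r a b) : a ≤ b := by
  induction h with
  | refl => exact le_rfl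
  | tail _ hbc ih => exact ih.trans (hlt _ _ hbc).le

theorem eqvGen_iff_reflTransGen_of_le [PartialOrder α] (hl : Relator.LeftUnique r)
    (hr : Relator.RightUnique r) (hlt : ∀ a b, r a b → a < b) (hab : a ≤ b) :
    EqvGen r a b ↔ ReflTransGen r a b := by
  rw [eqvGen_iff_reflTransGen_or hl hr]
  refine ⟨fun h ↦ h.elim id fun hba ↦ ?_, .inl⟩
  rw [le_antisymm hab (hba.le_of_lt hlt)]

end Relation

section IncreasingBijections

variable {α : Type*} [LinearOrder α]

structure IsIncreasingBijection (D R : Finset α) (A : Finset (α × α)) : Prop where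
  subset : A ⊆ D ×ˢ R
  existsUnique_snd : ∀ a ∈ D, ∃! b, (a, b) ∈ A
  existsUnique_fst : ∀ b ∈ R, ∃! a, (a, b) ∈ A
  lt : ∀ a b, (a, b) ∈ A → a < b

noncomputable def increasingBijections (D R : Finset α) : Finset (Finset (α × α)) :=
  {A ∈ (D ×ˢ R).powerset | IsIncreasingBijection D R A}

variable {D R : Finset α} {A : Finset (α × α)} {m r : α}

theorem mem_increasingBijections : A ∈ increasingBijections D R ↔ IsIncreasingBijection D R A :=
  mem_filter.trans ⟨And.right, fun h ↦ ⟨mem_powerset.2 h.subset, h⟩⟩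

namespace IsIncreasingBijection

variable (hA : IsIncreasingBijection D R A)
include hA

theorem fst_mem {a b : α} (h : (a, b) ∈ A) : a ∈ D := (mem_product.1 (hA.subset h)).1

theorem snd_mem {a b : α} (h : (a, b) ∈ A) : b ∈ R := (mem_product.1 (hA.subset h)).2

theorem rightUnique : Relator.RightUnique fun a b ↦ (a, b) ∈ A := fun a _ _ hb hc ↦
  (hA.existsUnique_snd a (hA.fst_mem hb)).unique hb hc

theorem leftUnique : Relator.LeftUnique fun a b ↦ (a, b) ∈ A := fun _ _ c ha hb ↦
  (hA.existsUnique_fst c (hA.snd_mem ha)).unique ha hb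

theorem exists_snd_iff (a : α) : (∃ b, (a, b) ∈ A) ↔ a ∈ D :=
  ⟨fun ⟨_, h⟩ ↦ hA.fst_mem h, fun h ↦ (hA.existsUnique_snd a h).exists⟩

theorem exists_fst_iff (b : α) : (∃ a, (a, b) ∈ A) ↔ b ∈ R :=
  ⟨fun ⟨_, h⟩ ↦ hA.snd_mem h, fun h ↦ (hA.existsUnique_fst b h).exists⟩

end IsIncreasingBijection

theorem IsIncreasingBijection.erase (hA : IsIncreasingBijection (insert m D) R A)
    (hmD : m ∉ D) (hmr : (m, r) ∈ A) :
    IsIncreasingBijection D (R.erase r) (A.erase (m, r)) := by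
  refine ⟨fun p hp ↦ ?_, fun a ha ↦ ?_, fun b hb ↦ ?_, fun a b h ↦ hA.lt a b (mem_of_mem_erase h)⟩
  · obtain ⟨hpne, hpA⟩ := mem_erase.1 hp
    have hp1m : p.1 ≠ m := fun h ↦ hpne <| Prod.ext h <| hA.rightUnique (h ▸ hpA) hmr
    have hp2r : p.2 ≠ r := fun h ↦ hp1m <| hA.leftUnique (h ▸ hpA) hmr
    exact mem_product.2
      ⟨(mem_insert.1 (hA.fst_mem hpA)).resolve_left hp1m, mem_erase.2 ⟨hp2r, hA.snd_mem hpA⟩⟩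
  · have ham : a ≠ m := ne_of_mem_of_not_mem ha hmD
    simpa [ham] using hA.existsUnique_snd a (mem_insert_of_mem ha)
  · obtain ⟨hbr, hb⟩ := mem_erase.1 hb
    simpa [hbr] using hA.existsUnique_fst b hb

theorem IsIncreasingBijection.insert (hA : IsIncreasingBijection D (R.erase r) A)
    (hmD : m ∉ D) (hr : r ∈ R) (hmr : m < r) :
    IsIncreasingBijection (insert m D) R (insert (m, r) A) := by
  have hm : ∀ b, (m, b) ∉ A := fun b h ↦ hmD (hA.fst_mem h)
  have hr' : ∀ a, (a, r) ∉ A := fun a h ↦ (mem_erase.1 (hA.snd_mem h)).1 rfl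
  refine ⟨?_, fun a ha ↦ ?_, fun b hb ↦ ?_, ?_⟩
  · refine insert_subset (mem_product.2 ⟨mem_insert_self m D, hr⟩) fun ⟨a, b⟩ h ↦ ?_
    exact mem_product.2 ⟨mem_insert_of_mem (hA.fst_mem h), mem_of_mem_erase (hA.snd_mem h)⟩
  · rcases mem_insert.1 ha with rfl | ha
    · simp [hm]
    · have ham : a ≠ m := ne_of_mem_of_not_mem ha hmD
      simpa [ham] using hA.existsUnique_snd a ha
  · by_cases hbr : b = r
    · subst hbr
      simp [hr']
    · simpa [hbr] using hA.existsUnique_fst b (mem_erase.2 ⟨hbr, hb⟩)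
  · simp only [mem_insert, Prod.mk.injEq]
    rintro a b (⟨rfl, rfl⟩ | h)
    exacts [hmr, hA.lt a b h]

theorem increasingBijections_insert_of_forall_lt (hm : ∀ x ∈ D, x < m) :
    increasingBijections (insert m D) R = {r ∈ R | m < r}.biUnion
      fun r ↦ (increasingBijections D (R.erase r)).image (insert (m, r)) := by
  have hmD : m ∉ D := fun h ↦ lt_irrefl m (hm m h)
  ext A
  simp only [mem_biUnion, mem_image, mem_filter]
  constructor
  · intro hA
    rw [mem_increasingBijections] at hA
    obtain ⟨r, hmr⟩ := (hA.existsUnique_snd m (mem_insert_self m D)).exists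
    exact ⟨r, ⟨hA.snd_mem hmr, hA.lt _ _ hmr⟩, A.erase (m, r),
      mem_increasingBijections.2 (hA.erase hmD hmr), insert_erase hmr⟩
  · rintro ⟨r, ⟨hr, hmr⟩, A, hA, rfl⟩
    exact mem_increasingBijections.2 ((mem_increasingBijections.1 hA).insert hmD hr hmr)

theorem card_image_insert_increasingBijections (hmD : m ∉ D) :
    #((increasingBijections D R).image (insert (m, r))) = #(increasingBijections D R) := by
  have hnotMem : ∀ A ∈ increasingBijections D R, (m, r) ∉ A :=
    fun A hA h ↦ hmD ((mem_increasingBijections.1 hA).fst_mem h)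
  refine card_image_of_injOn fun A₁ h₁ A₂ h₂ h ↦ ?_
  rw [← erase_insert (hnotMem A₁ h₁), ← erase_insert (hnotMem A₂ h₂), h]

theorem pairwiseDisjoint_image_insert_increasingBijections (hmD : m ∉ D) (s : Set α) :
    s.PairwiseDisjoint fun r ↦ (increasingBijections D (R.erase r)).image (insert (m, r)) := by
  intro r₁ _ r₂ _ hne
  refine disjoint_left.2 fun A h₁ h₂ ↦ ?_
  obtain ⟨A₁, hA₁, rfl⟩ := mem_image.1 h₁
  obtain ⟨A₂, -, h⟩ := mem_image.1 h₂
  rcases mem_insert.1 (h ▸ mem_insert_self _ _ : (m, r₂) ∈ insert (m, r₁) A₁) with h | h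
  · exact hne (Prod.ext_iff.1 h).2.symm
  · exact hmD ((mem_increasingBijections.1 hA₁).fst_mem h)

theorem card_increasingBijections (hDR : #D = #R) :
    #(increasingBijections D R) = ∏ i ∈ D, (#{r ∈ R | i < r} - #{d ∈ D | i < d}) := by
  induction D using Finset.induction_on_max generalizing R with
  | empty =>
    obtain rfl : R = ∅ := card_eq_zero.1 hDR.symm
    suffices increasingBijections (∅ : Finset α) ∅ = {∅} by simp [this]
    ext A
    rw [mem_increasingBijections, mem_singleton]
    refine ⟨fun h ↦ subset_empty.1 (by simpa using h.subset), ?_⟩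
    rintro rfl
    exact ⟨empty_subset _, by simp, by simp, by simp⟩
  | insert m D hm ih =>
    have hmD : m ∉ D := fun h ↦ lt_irrefl m (hm m h)
    have hfiber : ∀ r ∈ {r ∈ R | m < r},
        #((increasingBijections D (R.erase r)).image (insert (m, r))) =
          ∏ i ∈ D, (#{x ∈ R | i < x} - #{d ∈ insert m D | i < d}) := by
      intro r hr
      obtain ⟨hr, hmr⟩ := mem_filter.1 hr
      rw [card_image_insert_increasingBijections hmD,
        ih (by rw [card_erase_of_mem hr, ← hDR, card_insert_of_notMem hmD, Nat.add_sub_cancel])]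
      refine prod_congr rfl fun i hi ↦ ?_
      have hri : r ∈ {x ∈ R | i < x} := mem_filter.2 ⟨hr, (hm i hi).trans hmr⟩
      rw [filter_erase, card_erase_of_mem hri, filter_insert, if_pos (hm i hi),
        card_insert_of_notMem fun h ↦ hmD (mem_filter.1 h).1]
      have := card_pos.2 ⟨r, hri⟩
      omega
    have hmax : {d ∈ insert m D | m < d} = ∅ :=
      filter_eq_empty_iff.2 fun d hd ↦ by
        rcases mem_insert.1 hd with rfl | hd
        exacts [lt_irrefl d, not_lt.2 (hm d hd).le]
    rw [increasingBijections_insert_of_forall_lt hm,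
      card_biUnion (pairwiseDisjoint_image_insert_increasingBijections hmD _),
      sum_congr rfl hfiber, sum_const, smul_eq_mul, prod_insert hmD, hmax, card_empty, Nat.sub_zero]

end IncreasingBijections

namespace Finpartition

variable {α : Type*} [DecidableEq α] {s : Finset α}

theorem exists_mem_parts_iff (P : Finpartition s) {a : α} (ha : a ∈ s) {p : Finset α → Prop} :
    (∃ B ∈ P.parts, a ∈ B ∧ p B) ↔ p (P.part a) :=
  ⟨fun ⟨_, hB, haB, hp⟩ ↦ P.part_eq_of_mem hB haB ▸ hp,
    fun hp ↦ ⟨_, P.part_mem.2 ha, P.mem_part ha, hp⟩⟩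

theorem ext_part {P Q : Finpartition s} (h : ∀ a ∈ s, P.part a = Q.part a) : P = Q := by
  suffices ∀ P Q : Finpartition s, (∀ a ∈ s, P.part a = Q.part a) → P.parts ⊆ Q.parts from
    Finpartition.ext (this P Q h |>.antisymm <| this Q P fun a ha ↦ (h a ha).symm)
  intro P Q h B hB
  obtain ⟨a, haB⟩ := P.nonempty_of_mem_parts hB
  have ha := P.le hB haB
  rw [← P.part_eq_of_mem hB haB, h a ha]
  exact Q.part_mem.2 ha

theorem mem_part_comm (P : Finpartition s) {a b : α} : a ∈ P.part b ↔ b ∈ P.part a := by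
  simp only [mem_part_iff_exists, and_comm]

theorem part_eq_of_mem_part (P : Finpartition s) {a b : α} (h : b ∈ P.part a) :
    P.part b = P.part a :=
  P.part_eq_of_mem (P.part_mem.2 (P.part_nonempty.1 ⟨b, h⟩)) h

end Finpartition

section ArcsOf

open Relation

variable {n : ℕ} {P : Finpartition (Icc 1 n)} {i j a b : ℕ}

theorem mem_minsetOf_iff : i ∈ minsetOf P ↔ i ∈ Icc 1 n ∧ ∀ j ∈ P.part i, i ≤ j := by
  rw [minsetOf, mem_filter]
  exact and_congr_right fun hi ↦ P.exists_mem_parts_iff hi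

theorem mem_maxsetOf_iff : i ∈ maxsetOf P ↔ i ∈ Icc 1 n ∧ ∀ j ∈ P.part i, j ≤ i := by
  rw [maxsetOf, mem_filter]
  exact and_congr_right fun hi ↦ P.exists_mem_parts_iff hi

theorem mem_arcsOf_iff :
    (a, b) ∈ arcsOf P ↔ a < b ∧ b ∈ P.part a ∧ ∀ k ∈ P.part a, a < k → b ≤ k := by
  simp only [arcsOf, mem_filter, mem_product, imp_false, not_lt]
  constructor
  · rintro ⟨⟨ha, -⟩, hab, h⟩
    exact ⟨hab, (P.exists_mem_parts_iff ha).1 h⟩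
  · rintro ⟨hab, hb, h⟩
    have ha : a ∈ Icc 1 n := P.part_nonempty.1 ⟨b, hb⟩
    exact ⟨⟨ha, P.part_subset a hb⟩, hab, (P.exists_mem_parts_iff ha).2 ⟨hb, h⟩⟩

theorem part_eq_of_mem_arcsOf (h : (a, b) ∈ arcsOf P) : P.part b = P.part a :=
  P.part_eq_of_mem_part (mem_arcsOf_iff.1 h).2.1

theorem part_eq_of_eqvGen_arcsOf (h : EqvGen (fun a b ↦ (a, b) ∈ arcsOf P) a b) :
    P.part a = P.part b := by
  induction h with
  | rel _ _ h => exact (part_eq_of_mem_arcsOf h).symm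
  | refl => rfl
  | symm _ _ _ ih => exact ih.symm
  | trans _ _ _ _ _ ih₁ ih₂ => exact ih₁.trans ih₂

theorem exists_succ_mem_arcsOf (hj : j ∈ P.part a) (haj : a < j) :
    ∃ b, (a, b) ∈ arcsOf P ∧ b ≤ j := by
  have hne : {k ∈ P.part a | a < k}.Nonempty := ⟨j, mem_filter.2 ⟨hj, haj⟩⟩
  obtain ⟨hb, hab⟩ := mem_filter.1 (min'_mem _ hne)
  exact ⟨_, mem_arcsOf_iff.2 ⟨hab, hb, fun k hk hak ↦ min'_le _ k (mem_filter.2 ⟨hk, hak⟩)⟩,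
    min'_le _ j (mem_filter.2 ⟨hj, haj⟩)⟩

theorem exists_pred_mem_arcsOf (hj : j ∈ P.part b) (hjb : j < b) :
    ∃ a, (a, b) ∈ arcsOf P ∧ j ≤ a := by
  obtain ⟨a, ha, hamax⟩ : ∃ a ∈ {k ∈ P.part b | k < b}, ∀ k ∈ {k ∈ P.part b | k < b}, k ≤ a :=
    ⟨_, max'_mem _ ⟨j, mem_filter.2 ⟨hj, hjb⟩⟩, fun k hk ↦ le_max' _ k hk⟩
  obtain ⟨ha, hab⟩ := mem_filter.1 ha
  have hpart := P.part_eq_of_mem_part ha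
  refine ⟨a, mem_arcsOf_iff.2 ⟨hab, P.mem_part_comm.1 ha, fun k hk hak ↦ ?_⟩,
    hamax j (mem_filter.2 ⟨hj, hjb⟩)⟩
  rw [hpart] at hk
  by_contra! hkb
  exact (hamax k (mem_filter.2 ⟨hk, hkb⟩)).not_gt hak

theorem arcsOf_lt : ∀ a b, (a, b) ∈ arcsOf P → a < b := fun _ _ h ↦ (mem_arcsOf_iff.1 h).1

theorem arcsOf_rightUnique : Relator.RightUnique fun a b ↦ (a, b) ∈ arcsOf P := by
  intro a b c hb hc
  obtain ⟨hab, hb, hbmin⟩ := mem_arcsOf_iff.1 hb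
  obtain ⟨hac, hc, hcmin⟩ := mem_arcsOf_iff.1 hc
  exact (hbmin c hc hac).antisymm (hcmin b hb hab)

theorem arcsOf_leftUnique : Relator.LeftUnique fun a b ↦ (a, b) ∈ arcsOf P := by
  suffices ∀ a b c, (a, c) ∈ arcsOf P → (b, c) ∈ arcsOf P → a ≤ b from
    fun a b c ha hb ↦ (this a b c ha hb).antisymm (this b a c hb ha)
  intro a b c ha hb
  by_contra! hba
  have ha' : a ∈ P.part b := by
    rw [← part_eq_of_mem_arcsOf hb]
    exact P.mem_part_comm.1 (mem_arcsOf_iff.1 ha).2.1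
  exact ((mem_arcsOf_iff.1 hb).2.2 a ha' hba).not_gt (arcsOf_lt a c ha)

theorem reflTransGen_arcsOf (hij : i ≤ j) (hj : j ∈ P.part i) :
    ReflTransGen (fun a b ↦ (a, b) ∈ arcsOf P) i j := by
  induction j using Nat.strong_induction_on with
  | _ j ih =>
  rcases hij.eq_or_lt with rfl | hij
  · rfl
  obtain ⟨a, haj, hia⟩ := exists_pred_mem_arcsOf (P.mem_part_comm.1 hj) hij
  have ha : a ∈ P.part i := by
    rw [← P.part_eq_of_mem_part hj]
    exact P.mem_part_comm.1 (mem_arcsOf_iff.1 haj).2.1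
  exact (ih a (arcsOf_lt a j haj) hia ha).tail haj

noncomputable def ofArcs (n : ℕ) (A : Finset (ℕ × ℕ)) : Finpartition (Icc 1 n) :=
  Finpartition.ofSetSetoid (EqvGen.setoid fun a b ↦ (a, b) ∈ A) (Icc 1 n)

theorem mem_part_ofArcs {A : Finset (ℕ × ℕ)} : b ∈ (ofArcs n A).part a ↔
    a ∈ Icc 1 n ∧ b ∈ Icc 1 n ∧ EqvGen (fun a b ↦ (a, b) ∈ A) a b :=
  Finpartition.mem_part_ofSetSetoid_iff_rel _

theorem ofArcs_arcsOf : ofArcs n (arcsOf P) = P := by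
  refine Finpartition.ext_part fun a ha ↦ Finset.ext fun b ↦ ?_
  rw [mem_part_ofArcs]
  constructor
  · rintro ⟨-, hb, h⟩
    exact part_eq_of_eqvGen_arcsOf h ▸ P.mem_part hb
  · intro hb
    refine ⟨ha, P.part_subset a hb, ?_⟩
    rw [eqvGen_iff_reflTransGen_or arcsOf_leftUnique arcsOf_rightUnique]
    rcases le_total a b with hab | hba
    · exact .inl (reflTransGen_arcsOf hab hb)
    · exact .inr (reflTransGen_arcsOf hba (P.mem_part_comm.1 hb))

theorem isIncreasingBijection_arcsOf :
    IsIncreasingBijection (Icc 1 n \ maxsetOf P) (Icc 1 n \ minsetOf P) (arcsOf P) := by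
  refine ⟨fun ⟨a, b⟩ h ↦ ?_, fun a ha ↦ ?_, fun b hb ↦ ?_, arcsOf_lt⟩
  · obtain ⟨hab, hb, -⟩ := mem_arcsOf_iff.1 h
    have ha : a ∈ Icc 1 n := P.part_nonempty.1 ⟨b, hb⟩
    simp only [mem_product, mem_sdiff, mem_maxsetOf_iff, mem_minsetOf_iff, not_and, not_forall,
      not_le]
    exact ⟨⟨ha, fun _ ↦ ⟨b, hb, hab⟩⟩,
      ⟨P.part_subset a hb, fun _ ↦ ⟨a, P.mem_part_comm.1 hb, hab⟩⟩⟩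
  · simp only [mem_sdiff, mem_maxsetOf_iff, not_and, not_forall, not_le] at ha
    obtain ⟨j, hj, haj⟩ := ha.2 ha.1
    obtain ⟨b, hb, -⟩ := exists_succ_mem_arcsOf hj haj
    exact ⟨b, hb, fun c hc ↦ arcsOf_rightUnique hc hb⟩
  · simp only [mem_sdiff, mem_minsetOf_iff, not_and, not_forall, not_le] at hb
    obtain ⟨j, hj, hjb⟩ := hb.2 hb.1
    obtain ⟨a, ha, -⟩ := exists_pred_mem_arcsOf hj hjb
    exact ⟨a, ha, fun c hc ↦ arcsOf_leftUnique hc ha⟩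

end ArcsOf

namespace IsIncreasingBijection

open Relation

variable {n : ℕ} {S T : Finset ℕ} {A : Finset (ℕ × ℕ)} {a b j : ℕ}
variable (hA : IsIncreasingBijection (Icc 1 n \ T) (Icc 1 n \ S) A)
include hA

theorem mem_part_ofArcs_of_mem (h : (a, b) ∈ A) : b ∈ (ofArcs n A).part a := by
  exact mem_part_ofArcs.2
    ⟨(mem_sdiff.1 (hA.fst_mem h)).1, (mem_sdiff.1 (hA.snd_mem h)).1, .rel _ _ h⟩

theorem reflTransGen_of_mem_part_ofArcs (hab : a ≤ b) (hb : b ∈ (ofArcs n A).part a) :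
    ReflTransGen (fun a b ↦ (a, b) ∈ A) a b :=
  (eqvGen_iff_reflTransGen_of_le hA.leftUnique hA.rightUnique hA.lt hab).1
    (mem_part_ofArcs.1 hb).2.2

theorem exists_succ_of_mem_part_ofArcs (hj : j ∈ (ofArcs n A).part a) (haj : a < j) :
    ∃ b, (a, b) ∈ A ∧ b ≤ j := by
  obtain rfl | ⟨b, hab, hbj⟩ := (hA.reflTransGen_of_mem_part_ofArcs haj.le hj).cases_head
  · exact (lt_irrefl a haj).elim
  · exact ⟨b, hab, hbj.le_of_lt hA.lt⟩

theorem exists_pred_of_mem_part_ofArcs (hj : j ∈ (ofArcs n A).part b) (hjb : j < b) :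
    ∃ a, (a, b) ∈ A ∧ j ≤ a := by
  obtain rfl | ⟨a, hja, hab⟩ :=
    (hA.reflTransGen_of_mem_part_ofArcs hjb.le ((ofArcs n A).mem_part_comm.1 hj)).cases_tail
  · exact (lt_irrefl b hjb).elim
  · exact ⟨a, hab, hja.le_of_lt hA.lt⟩

theorem minsetOf_ofArcs (hS : S ⊆ Icc 1 n) : minsetOf (ofArcs n A) = S := by
  ext i
  rw [mem_minsetOf_iff]
  by_cases hi : i ∈ Icc 1 n
  swap
  · exact iff_of_false (fun h ↦ hi h.1) (fun h ↦ hi (hS h))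
  have hpred := hA.exists_fst_iff i
  rw [mem_sdiff, and_iff_right hi] at hpred
  rw [and_iff_right hi, ← not_iff_not, ← hpred]
  push Not
  constructor
  · rintro ⟨j, hj, hji⟩
    obtain ⟨a, ha, -⟩ := hA.exists_pred_of_mem_part_ofArcs hj hji
    exact ⟨a, ha⟩
  · rintro ⟨a, ha⟩
    exact ⟨a, (ofArcs n A).mem_part_comm.1 (hA.mem_part_ofArcs_of_mem ha), hA.lt a i ha⟩

theorem maxsetOf_ofArcs (hT : T ⊆ Icc 1 n) : maxsetOf (ofArcs n A) = T := by
  ext i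
  rw [mem_maxsetOf_iff]
  by_cases hi : i ∈ Icc 1 n
  swap
  · exact iff_of_false (fun h ↦ hi h.1) (fun h ↦ hi (hT h))
  have hsucc := hA.exists_snd_iff i
  rw [mem_sdiff, and_iff_right hi] at hsucc
  rw [and_iff_right hi, ← not_iff_not, ← hsucc]
  push Not
  constructor
  · rintro ⟨j, hj, hij⟩
    obtain ⟨b, hb, -⟩ := hA.exists_succ_of_mem_part_ofArcs hj hij
    exact ⟨b, hb⟩
  · rintro ⟨b, hb⟩
    exact ⟨b, hA.mem_part_ofArcs_of_mem hb, hA.lt i b hb⟩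

theorem arcsOf_ofArcs : arcsOf (ofArcs n A) = A := by
  ext ⟨a, b⟩
  rw [mem_arcsOf_iff]
  constructor
  · rintro ⟨hab, hb, hbmin⟩
    obtain ⟨d, had, hdb⟩ := hA.exists_succ_of_mem_part_ofArcs hb hab
    obtain rfl : d = b := hdb.antisymm (hbmin d (hA.mem_part_ofArcs_of_mem had) (hA.lt a d had))
    exact had
  · intro hab
    refine ⟨hA.lt a b hab, hA.mem_part_ofArcs_of_mem hab, fun k hk hak ↦ ?_⟩
    obtain ⟨d, had, hdk⟩ := hA.exists_succ_of_mem_part_ofArcs hk hak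
    exact hA.rightUnique hab had ▸ hdk

end IsIncreasingBijection

theorem card_filter_lt_Icc_sdiff_add (n i : ℕ) (X : Finset ℕ) :
    #{x ∈ Icc 1 n \ X | i < x} + #(X ∩ Icc (i + 1) n) = n - i := by
  have : {x ∈ Icc 1 n \ X | i < x} = Icc (i + 1) n \ X := by
    ext x
    simp only [mem_filter, mem_sdiff, mem_Icc]
    constructor
    · rintro ⟨⟨⟨-, hxn⟩, hx⟩, hix⟩
      exact ⟨⟨hix, hxn⟩, hx⟩
    · rintro ⟨⟨hix, hxn⟩, hx⟩
      exact ⟨⟨⟨by omega, hxn⟩, hx⟩, hix⟩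
  rw [this, inter_comm, card_sdiff_add_card_inter, Nat.card_Icc, Nat.add_sub_add_right]

theorem card_pnST_eq_card_increasingBijections {n : ℕ} {S T : Finset ℕ}
    (hS : S ⊆ Icc 1 n) (hT : T ⊆ Icc 1 n) :
    #(pnST n S T) = #(increasingBijections (Icc 1 n \ T) (Icc 1 n \ S)) := by
  refine card_nbij' arcsOf (ofArcs n) (fun P hP ↦ ?_) (fun A hA ↦ ?_)
    (fun P _ ↦ ofArcs_arcsOf) (fun A hA ↦ (mem_increasingBijections.1 hA).arcsOf_ofArcs)
  · obtain ⟨-, rfl, rfl⟩ := mem_filter.1 hP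
    exact mem_increasingBijections.2 isIncreasingBijection_arcsOf
  · have hA := mem_increasingBijections.1 hA
    exact mem_filter.2 ⟨mem_univ _, hA.minsetOf_ofArcs hS, hA.maxsetOf_ofArcs hT⟩

theorem pnST_card (n : ℕ) (S T : Finset ℕ)
    (hS : S ⊆ Finset.Icc 1 n) (hT : T ⊆ Finset.Icc 1 n) (hcard : S.card = T.card) :
    (pnST n S T).card = ∏ i ∈ Finset.Icc 1 n \ T, hST n S T i := by
  have hcard' : #(Icc 1 n \ T) = #(Icc 1 n \ S) := by
    rw [card_sdiff_of_subset hT, card_sdiff_of_subset hS, hcard]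
  rw [card_pnST_eq_card_increasingBijections hS hT, card_increasingBijections hcard']
  refine prod_congr rfl fun i _ ↦ ?_
  have hS' := card_filter_lt_Icc_sdiff_add n i S
  have hT' := card_filter_lt_Icc_sdiff_add n i T
  rw [hST]
  omega
end

section
/- For every m ≥ 1, ∑_{M perfect matching of [2m]} y^{Cr₂(M)} = ∑_{(S,T)} ∏_{i ∉ T} (1 + y + ⋯ + y^{h(i)-1}), where the outer sum is over all pairs S = min(M)-sets, T = max(M)-sets with S ∩ T = ∅, S ∪ T = [2m], |S| = |T| = m, and whose lattice path L(S,T) is nonnegative, and h(i) = |T ∩ {i+1,…,2m}| − |S ∩ {i+1,…,2m}|. -/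
open Finset
open scoped Classical

/-- major index of a permutation of [n], via its word π(1)…π(n) -/
def majPerm {n : ℕ} (π : Equiv.Perm (Fin n)) : ℕ := majList (List.ofFn (fun i => (π i : ℕ) + 1))

/-- inversion number of a permutation of [n] -/
def invPerm {n : ℕ} (π : Equiv.Perm (Fin n)) : ℕ := invList (List.ofFn (fun i => (π i : ℕ) + 1))

/-- the matching M_π of [2m] with arcs (m+1-π(i), i+m) for 1 ≤ i ≤ m -/
def Mpi (m : ℕ) (π : Equiv.Perm (Fin m)) : Finset (ℕ × ℕ) :=
  Finset.univ.image (fun i : Fin m => (m + 1 - ((π i : ℕ) + 1), ((i : ℕ) + 1) + m))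

/-- vertical displacement of the k-th step (k = 1,…,2n) of the lattice path L(S,T):
the two steps for vertex i are steps 2i-1 and 2i; the first step goes down unless i ∈ S,
the second goes up unless i ∈ T. -/
def stepDelta (S T : Finset ℕ) (k : ℕ) : ℤ :=
  if k % 2 = 1 then (if (k + 1) / 2 ∈ S then 0 else -1) else (if k / 2 ∈ T then 0 else 1)

/-- the height (y-coordinate) of the lattice path L(S,T) after k steps -/
def pathHt (S T : Finset ℕ) (k : ℕ) : ℤ := ∑ j ∈ Finset.Icc 1 k, stepDelta S T j

-- CORE
noncomputable def matchSets (S T : Finset ℕ) : Finset (Finset (ℕ × ℕ)) :=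
  (S ×ˢ T).powerset.filter (fun A => (∀ e ∈ A, e.1 < e.2) ∧
    A.image Prod.fst = S ∧ A.image Prod.snd = T ∧ A.card = S.card ∧ A.card = T.card)

def hf (S T : Finset ℕ) (a : ℕ) : ℕ :=
  (T.filter (fun x => a < x)).card - (S.filter (fun x => a < x)).card

lemma rank_sum {R : Type*} [CommRing R] (y : R) (U : Finset ℕ) :
    ∑ t ∈ U, y ^ (U.filter (fun x => x < t)).card = ∑ j ∈ Finset.range U.card, y ^ j := by
  induction U using Finset.strongInduction with
  | _ U ih =>
    rcases U.eq_empty_or_nonempty with rfl | hU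
    · simp
    · set M := U.max' hU with hM
      have hMU : M ∈ U := U.max'_mem hU
      have h1 : U.filter (fun x => x < M) = U.erase M := by
        ext x
        simp only [mem_filter, mem_erase]
        exact ⟨fun ⟨hx, hlt⟩ => ⟨ne_of_lt hlt, hx⟩,
          fun ⟨hne, hx⟩ => ⟨hx, lt_of_le_of_ne (U.le_max' x hx) hne⟩⟩
      rw [← Finset.add_sum_erase _ _ hMU, h1]
      have h2 : ∀ t ∈ U.erase M, y ^ (U.filter (fun x => x < t)).card
          = y ^ ((U.erase M).filter (fun x => x < t)).card := by
        intro t ht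
        have : (U.erase M).filter (fun x => x < t) = U.filter (fun x => x < t) := by
          rw [Finset.filter_erase, Finset.erase_eq_of_notMem]
          simp only [mem_filter, not_and, not_lt]
          intro _
          exact U.le_max' t (mem_erase.1 ht).2
        rw [this]
      rw [Finset.sum_congr rfl h2, ih (U.erase M) (Finset.erase_ssubset hMU)]
      have hc : U.card = (U.erase M).card + 1 := by
        rw [card_erase_of_mem hMU]
        have := Finset.card_pos.2 hU
        omega
      rw [hc, Finset.sum_range_succ, card_erase_of_mem hMU]
      ring

lemma mem_matchSets {S T : Finset ℕ} {A : Finset (ℕ × ℕ)} :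
    A ∈ matchSets S T ↔ A ⊆ S ×ˢ T ∧ (∀ e ∈ A, e.1 < e.2) ∧
      A.image Prod.fst = S ∧ A.image Prod.snd = T ∧ A.card = S.card ∧ A.card = T.card := by
  simp only [matchSets, mem_filter, mem_powerset]

lemma fst_injOn {S T : Finset ℕ} {A : Finset (ℕ × ℕ)} (hA : A ∈ matchSets S T) :
    Set.InjOn Prod.fst (A : Set (ℕ × ℕ)) := by
  obtain ⟨-, -, h1, -, h2, -⟩ := mem_matchSets.1 hA
  exact Finset.card_image_iff.1 (by rw [h1, ← h2])

lemma snd_injOn {S T : Finset ℕ} {A : Finset (ℕ × ℕ)} (hA : A ∈ matchSets S T) :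
    Set.InjOn Prod.snd (A : Set (ℕ × ℕ)) := by
  obtain ⟨-, -, -, h1, -, h2⟩ := mem_matchSets.1 hA
  exact Finset.card_image_iff.1 (by rw [h1, ← h2])

lemma decomp {S T : Finset ℕ} {A : Finset (ℕ × ℕ)} (hA : A ∈ matchSets S T)
    (hS : S.Nonempty) :
    ∃ t₀ ∈ T, S.max' hS < t₀ ∧ (S.max' hS, t₀) ∈ A ∧
      A.erase (S.max' hS, t₀) ∈ matchSets (S.erase (S.max' hS)) (T.erase t₀) := by
  obtain ⟨hsub, hlt, hfst, hsnd, hcS, hcT⟩ := mem_matchSets.1 hA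
  set s₀ := S.max' hS with hs₀
  have hs₀S : s₀ ∈ S := S.max'_mem hS
  obtain ⟨e, heA, hefst⟩ : ∃ e ∈ A, e.1 = s₀ := by
    rw [← hfst] at hs₀S
    simpa using hs₀S
  refine ⟨e.2, ?_, ?_, ?_, ?_⟩
  · rw [← hsnd]; exact Finset.mem_image_of_mem _ heA
  · rw [← hefst]; exact hlt e heA
  · rw [← hefst]; exact heA
  · have hee : (s₀, e.2) = e := by rw [← hefst]
    rw [hee]
    set t₀ := e.2 with ht₀
    rw [mem_matchSets]
    have hfst' : ∀ f ∈ A.erase e, f.1 ∈ S.erase s₀ := by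
      intro f hf
      rw [mem_erase] at hf
      refine mem_erase.2 ⟨fun h => hf.1 ?_, by rw [← hfst]; exact mem_image_of_mem _ hf.2⟩
      exact fst_injOn hA hf.2 heA (by rw [h, hefst])
    have hsnd' : ∀ f ∈ A.erase e, f.2 ∈ T.erase t₀ := by
      intro f hf
      rw [mem_erase] at hf
      refine mem_erase.2 ⟨fun h => hf.1 ?_, by rw [← hsnd]; exact mem_image_of_mem _ hf.2⟩
      exact snd_injOn hA hf.2 heA h
    refine ⟨?_, fun f hf => hlt f (Finset.erase_subset _ _ hf), ?_, ?_, ?_, ?_⟩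
    · intro f hf
      exact mem_product.2 ⟨hfst' f hf, hsnd' f hf⟩
    · apply Finset.Subset.antisymm
      · intro x hx
        obtain ⟨f, hf, rfl⟩ := mem_image.1 hx
        exact hfst' f hf
      · intro x hx
        rw [mem_erase, ← hfst] at hx
        obtain ⟨f, hf, rfl⟩ := mem_image.1 hx.2
        have hne := hx.1
        exact mem_image_of_mem _ (mem_erase.2 ⟨fun h => hne (by rw [h, hefst]), hf⟩)
    · apply Finset.Subset.antisymm
      · intro x hx
        obtain ⟨f, hf, rfl⟩ := mem_image.1 hx
        exact hsnd' f hf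
      · intro x hx
        rw [mem_erase, ← hsnd] at hx
        obtain ⟨f, hf, rfl⟩ := mem_image.1 hx.2
        have hne := hx.1
        exact mem_image_of_mem _ (mem_erase.2 ⟨fun h => hne (by rw [h]), hf⟩)
    · rw [card_erase_of_mem heA, card_erase_of_mem hs₀S, hcS]
    · rw [card_erase_of_mem heA, card_erase_of_mem (by rw [← hsnd]; exact mem_image_of_mem _ heA), hcT]

lemma insert_mem_matchSets {S T : Finset ℕ} {A' : Finset (ℕ × ℕ)} {s₀ t₀ : ℕ}
    (hs₀ : s₀ ∈ S) (ht₀ : t₀ ∈ T) (hlt : s₀ < t₀)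
    (hA' : A' ∈ matchSets (S.erase s₀) (T.erase t₀)) :
    (s₀, t₀) ∉ A' ∧ insert (s₀, t₀) A' ∈ matchSets S T := by
  obtain ⟨hsub, hl, hfst, hsnd, hcS, hcT⟩ := mem_matchSets.1 hA'
  have hnot : (s₀, t₀) ∉ A' := by
    intro h
    have := mem_product.1 (hsub h)
    exact (mem_erase.1 this.1).1 rfl
  refine ⟨hnot, mem_matchSets.2 ⟨?_, ?_, ?_, ?_, ?_, ?_⟩⟩
  · intro f hf
    rcases mem_insert.1 hf with rfl | hf
    · exact mem_product.2 ⟨hs₀, ht₀⟩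
    · have := mem_product.1 (hsub hf)
      exact mem_product.2 ⟨mem_of_mem_erase this.1, mem_of_mem_erase this.2⟩
  · intro f hf
    rcases mem_insert.1 hf with rfl | hf
    · exact hlt
    · exact hl f hf
  · rw [Finset.image_insert, hfst]
    exact Finset.insert_erase hs₀
  · rw [Finset.image_insert, hsnd]
    exact Finset.insert_erase ht₀
  · rw [Finset.card_insert_of_notMem hnot, hcS, card_erase_of_mem hs₀,
      Nat.sub_add_cancel (Finset.card_pos.2 ⟨s₀, hs₀⟩)]
  · rw [Finset.card_insert_of_notMem hnot, hcT, card_erase_of_mem ht₀,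
      Nat.sub_add_cancel (Finset.card_pos.2 ⟨t₀, ht₀⟩)]

lemma cr2_sum (B : Finset (ℕ × ℕ)) :
    cr2 B = ∑ p ∈ B, ∑ q ∈ B, if p.1 < q.1 ∧ q.1 < p.2 ∧ p.2 < q.2 then 1 else 0 := by
  rw [cr2, Finset.card_filter, Finset.sum_product]

lemma cr2_insert {S T : Finset ℕ} {A' : Finset (ℕ × ℕ)} {s₀ t₀ : ℕ}
    (hmax : ∀ x ∈ S, x ≤ s₀) (hlt : s₀ < t₀)
    (hA' : A' ∈ matchSets (S.erase s₀) (T.erase t₀)) :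
    cr2 (insert (s₀, t₀) A') = cr2 A' + (T.filter (fun t => s₀ < t ∧ t < t₀)).card := by
  obtain ⟨hsub, hl, hfst, hsnd, hcS, hcT⟩ := mem_matchSets.1 hA'
  have hnot : (s₀, t₀) ∉ A' := fun h =>
    (mem_erase.1 (mem_product.1 (hsub h)).1).1 rfl
  have hfstlt : ∀ q ∈ A', q.1 < s₀ := by
    intro q hq
    have := mem_erase.1 (mem_product.1 (hsub hq)).1
    exact lt_of_le_of_ne (hmax _ this.2) this.1
  rw [cr2_sum, cr2_sum, Finset.sum_insert hnot]
  have inner : ∀ p ∈ insert (s₀, t₀) A',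
      (∑ q ∈ insert (s₀, t₀) A', if p.1 < q.1 ∧ q.1 < p.2 ∧ p.2 < q.2 then 1 else 0)
      = (if p.1 < s₀ ∧ s₀ < p.2 ∧ p.2 < t₀ then 1 else 0)
        + ∑ q ∈ A', if p.1 < q.1 ∧ q.1 < p.2 ∧ p.2 < q.2 then 1 else 0 := by
    intro p _
    rw [Finset.sum_insert hnot]
  rw [Finset.sum_congr rfl (fun p hp => inner p (mem_insert_of_mem hp)),
    Finset.sum_insert hnot]
  have h1 : (if (s₀, t₀).1 < s₀ ∧ s₀ < (s₀, t₀).2 ∧ (s₀, t₀).2 < t₀ then 1 else 0) = 0 := by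
    simp
  have h2 : (∑ q ∈ A', if (s₀, t₀).1 < q.1 ∧ q.1 < (s₀, t₀).2 ∧ (s₀, t₀).2 < q.2 then 1 else 0) = 0 := by
    apply Finset.sum_eq_zero
    intro q hq
    simp only [ite_eq_right_iff]
    intro h
    exact absurd h.1 (not_lt.2 (le_of_lt (hfstlt q hq)))
  have h3 : (∑ p ∈ A', if p.1 < s₀ ∧ s₀ < p.2 ∧ p.2 < t₀ then (1:ℕ) else 0)
      = (T.filter (fun t => s₀ < t ∧ t < t₀)).card := by
    have e1 : (∑ p ∈ A', if p.1 < s₀ ∧ s₀ < p.2 ∧ p.2 < t₀ then (1:ℕ) else 0)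
        = (A'.filter (fun p => s₀ < p.2 ∧ p.2 < t₀)).card := by
      rw [Finset.card_filter]
      apply Finset.sum_congr rfl
      intro p hp
      congr 1
      simp only [eq_iff_iff]
      exact ⟨fun h => ⟨h.2.1, h.2.2⟩, fun h => ⟨hfstlt p hp, h.1, h.2⟩⟩
    rw [e1]
    have e2 : (T.filter (fun t => s₀ < t ∧ t < t₀))
        = (T.erase t₀).filter (fun t => s₀ < t ∧ t < t₀) := by
      rw [Finset.filter_erase, Finset.erase_eq_of_notMem]
      simp only [mem_filter, not_and]
      intro _ _ h
      exact absurd h (lt_irrefl t₀)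
    rw [e2, ← hsnd, Finset.filter_image]
    rw [Finset.card_image_of_injOn]
    exact Set.InjOn.mono (fun x hx => by
      simpa using (Finset.mem_filter.1 (by exact_mod_cast hx)).1) (snd_injOn hA')
  rw [h1, h2, Finset.sum_add_distrib, h3]
  ring

theorem core_sum {R : Type*} [CommRing R] (y : R) :
    ∀ (n : ℕ) (S T : Finset ℕ), S.card = n → T.card = n →
    ∑ A ∈ matchSets S T, y ^ cr2 A = ∏ a ∈ S, ∑ j ∈ Finset.range (hf S T a), y ^ j := by
  intro n
  induction n with
  | zero =>
    intro S T hS hT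
    rw [Finset.card_eq_zero] at hS hT
    subst hS; subst hT
    have : matchSets ∅ ∅ = {∅} := by
      ext A
      simp only [mem_matchSets, Finset.mem_singleton]
      constructor
      · rintro ⟨h, -⟩
        simpa using Finset.subset_empty.1 (by simpa using h)
      · rintro rfl
        simp
    rw [this]
    simp [cr2]
  | succ n ih =>
    intro S T hS hT
    have hSne : S.Nonempty := Finset.card_pos.1 (by omega)
    set s₀ := S.max' hSne with hs₀def
    have hs₀S : s₀ ∈ S := S.max'_mem hSne
    set U := T.filter (fun x => s₀ < x) with hUdef
    have hC : ∀ q ∈ U.sigma (fun t₀ => matchSets (S.erase s₀) (T.erase t₀)),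
        insert (s₀, q.1) q.2 ∈ matchSets S T ∧ (s₀, q.1) ∉ q.2 := by
      rintro ⟨t₀, A'⟩ hq
      rw [Finset.mem_sigma] at hq
      obtain ⟨ht₀, hA'⟩ := hq
      rw [hUdef, mem_filter] at ht₀
      obtain ⟨h1, h2⟩ := insert_mem_matchSets hs₀S ht₀.1 ht₀.2 hA'
      exact ⟨h2, h1⟩
    have himg : matchSets S T
        = (U.sigma (fun t₀ => matchSets (S.erase s₀) (T.erase t₀))).image
            (fun q => insert (s₀, q.1) q.2) := by
      apply Finset.Subset.antisymm
      · intro A hA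
        obtain ⟨t₀, ht₀, hlt, hmem, herase⟩ := decomp hA hSne
        apply Finset.mem_image.2
        refine ⟨⟨t₀, A.erase (s₀, t₀)⟩, ?_, ?_⟩
        · exact Finset.mem_sigma.2 ⟨mem_filter.2 ⟨ht₀, hlt⟩, herase⟩
        · exact Finset.insert_erase hmem
      · intro A hA
        obtain ⟨q, hq, rfl⟩ := Finset.mem_image.1 hA
        exact (hC q hq).1
    have hinj : ∀ q ∈ U.sigma (fun t₀ => matchSets (S.erase s₀) (T.erase t₀)),
        ∀ q' ∈ U.sigma (fun t₀ => matchSets (S.erase s₀) (T.erase t₀)),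
        insert (s₀, q.1) q.2 = insert (s₀, q'.1) q'.2 → q = q' := by
      rintro ⟨t₁, A₁⟩ h1 ⟨t₂, A₂⟩ h2 heq
      rw [Finset.mem_sigma] at h1 h2
      have hfst2 : ∀ f ∈ A₂, f.1 ≠ s₀ := by
        intro f hf
        have := (mem_product.1 ((mem_matchSets.1 h2.2).1 hf)).1
        exact (mem_erase.1 this).1
      have ht : t₁ = t₂ := by
        have : (s₀, t₁) ∈ insert (s₀, t₂) A₂ := heq ▸ Finset.mem_insert_self _ _
        rcases Finset.mem_insert.1 this with h | h
        · exact (Prod.mk.injEq .. ▸ h).2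
        · exact absurd rfl (hfst2 _ h)
      subst ht
      have hnm1 : (s₀, t₁) ∉ A₁ := (hC ⟨t₁, A₁⟩ (Finset.mem_sigma.2 h1)).2
      have hnm2 : (s₀, t₁) ∉ A₂ := (hC ⟨t₁, A₂⟩ (Finset.mem_sigma.2 h2)).2
      have : A₁ = A₂ := by
        rw [← Finset.erase_insert hnm1, ← Finset.erase_insert hnm2, heq]
      rw [this]
    rw [himg, Finset.sum_image hinj, Finset.sum_sigma]
    have hterm : ∀ t₀ ∈ U, ∀ A' ∈ matchSets (S.erase s₀) (T.erase t₀),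
        (y ^ cr2 (insert (s₀, t₀) A')) = y ^ (U.filter (fun x => x < t₀)).card * y ^ cr2 A' := by
      intro t₀ ht₀ A' hA'
      rw [hUdef, mem_filter] at ht₀
      rw [cr2_insert (fun x hx => S.le_max' x hx) ht₀.2 hA']
      rw [hUdef, Finset.filter_filter]
      rw [pow_add]
      ring
    have hIH : ∀ t₀ ∈ U, ∑ A' ∈ matchSets (S.erase s₀) (T.erase t₀), y ^ cr2 A'
        = ∏ a ∈ S.erase s₀, ∑ j ∈ Finset.range (hf S T a), y ^ j := by
      intro t₀ ht₀
      rw [hUdef, mem_filter] at ht₀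
      rw [ih (S.erase s₀) (T.erase t₀)
        (by rw [card_erase_of_mem hs₀S, hS]; omega) (by rw [card_erase_of_mem ht₀.1, hT]; omega)]
      apply Finset.prod_congr rfl
      intro a ha
      have halt : a < s₀ := lt_of_le_of_ne (S.le_max' a (mem_of_mem_erase ha)) (mem_erase.1 ha).1
      have hfeq : hf (S.erase s₀) (T.erase t₀) a = hf S T a := by
        unfold hf
        rw [Finset.filter_erase, Finset.filter_erase,
          card_erase_of_mem (mem_filter.2 ⟨ht₀.1, lt_trans halt ht₀.2⟩),
          card_erase_of_mem (mem_filter.2 ⟨hs₀S, halt⟩)]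
        exact Nat.sub_sub_sub_cancel_right (Finset.card_pos.2 ⟨s₀, mem_filter.2 ⟨hs₀S, halt⟩⟩)
      rw [hfeq]
    calc ∑ t₀ ∈ U, ∑ A' ∈ matchSets (S.erase s₀) (T.erase t₀), y ^ cr2 (insert (s₀, t₀) A')
        = ∑ t₀ ∈ U, y ^ (U.filter (fun x => x < t₀)).card *
            ∏ a ∈ S.erase s₀, ∑ j ∈ Finset.range (hf S T a), y ^ j := by
          apply Finset.sum_congr rfl
          intro t₀ ht₀
          rw [Finset.sum_congr rfl (hterm t₀ ht₀), ← Finset.mul_sum, hIH t₀ ht₀]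
      _ = (∑ t₀ ∈ U, y ^ (U.filter (fun x => x < t₀)).card) *
            ∏ a ∈ S.erase s₀, ∑ j ∈ Finset.range (hf S T a), y ^ j := by
          rw [Finset.sum_mul]
      _ = (∑ j ∈ Finset.range (hf S T s₀), y ^ j) *
            ∏ a ∈ S.erase s₀, ∑ j ∈ Finset.range (hf S T a), y ^ j := by
          rw [rank_sum]
          congr 2
          unfold hf
          have : S.filter (fun x => s₀ < x) = ∅ := by
            apply Finset.filter_eq_empty_iff.2
            intro x hx
            exact not_lt.2 (S.le_max' x hx)
          rw [this]
          simp [hUdef]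
      _ = ∏ a ∈ S, ∑ j ∈ Finset.range (hf S T a), y ^ j := Finset.mul_prod_erase S (fun a => ∑ j ∈ Finset.range (hf S T a), y ^ j) hs₀S


-- TRANSLATION

lemma arc_mem_iff {n : ℕ} {M : Finpartition (Finset.Icc 1 n)} (hM : ∀ B ∈ M.parts, B.card = 2)
    {a b : ℕ} : (a, b) ∈ arcsOf M ↔ a < b ∧ ({a, b} : Finset ℕ) ∈ M.parts := by
  unfold arcsOf
  simp only [Finset.mem_filter, Finset.mem_product]
  constructor
  · rintro ⟨⟨ha, hb⟩, hab, B, hB, haB, hbB, -⟩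
    refine ⟨hab, ?_⟩
    have hBcard := hM B hB
    have hsub : ({a, b} : Finset ℕ) ⊆ B := by
      intro x hx
      rcases Finset.mem_insert.1 hx with rfl | hx
      · exact haB
      · rwa [Finset.mem_singleton.1 hx]
    have hcard : ({a, b} : Finset ℕ).card = 2 := Finset.card_pair (ne_of_lt hab)
    have heq : ({a, b} : Finset ℕ) = B :=
      Finset.eq_of_subset_of_card_le hsub (by omega)
    rwa [heq]
  · rintro ⟨hab, hB⟩
    have hsubIcc : ({a, b} : Finset ℕ) ⊆ Finset.Icc 1 n := M.le hB
    refine ⟨⟨hsubIcc (by simp), hsubIcc (by simp)⟩, hab, {a, b}, hB, by simp, by simp, ?_⟩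
    intro k hk h1 h2
    rcases Finset.mem_insert.1 hk with rfl | hk
    · exact absurd h1 (lt_irrefl _)
    · rw [Finset.mem_singleton.1 hk] at h2
      exact absurd h2 (lt_irrefl _)

lemma mem_minsetOf_iff_s15 {n : ℕ} {M : Finpartition (Finset.Icc 1 n)}
    (hM : ∀ B ∈ M.parts, B.card = 2) {i : ℕ} :
    i ∈ minsetOf M ↔ ∃ b, (i, b) ∈ arcsOf M := by
  unfold minsetOf
  rw [Finset.mem_filter]
  constructor
  · rintro ⟨hi, B, hB, hiB, hmin⟩
    obtain ⟨x, y, hxy, rfl⟩ := Finset.card_eq_two.1 (hM B hB)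
    rcases Finset.mem_insert.1 hiB with rfl | hiy
    · refine ⟨y, (arc_mem_iff hM).2 ⟨?_, hB⟩⟩
      exact lt_of_le_of_ne (hmin y (by simp)) hxy
    · obtain rfl : i = y := Finset.mem_singleton.1 hiy
      refine ⟨x, (arc_mem_iff hM).2 ⟨?_, ?_⟩⟩
      · exact lt_of_le_of_ne (hmin x (by simp)) (Ne.symm hxy)
      · rwa [Finset.pair_comm]
  · rintro ⟨b, hb⟩
    obtain ⟨hib, hB⟩ := (arc_mem_iff hM).1 hb
    refine ⟨M.le hB (by simp), {i, b}, hB, by simp, ?_⟩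
    intro j hj
    rcases Finset.mem_insert.1 hj with rfl | hj
    · exact le_refl _
    · rw [Finset.mem_singleton.1 hj]
      exact le_of_lt hib

lemma mem_maxsetOf_iff_s15 {n : ℕ} {M : Finpartition (Finset.Icc 1 n)}
    (hM : ∀ B ∈ M.parts, B.card = 2) {i : ℕ} :
    i ∈ maxsetOf M ↔ ∃ a, (a, i) ∈ arcsOf M := by
  unfold maxsetOf
  rw [Finset.mem_filter]
  constructor
  · rintro ⟨hi, B, hB, hiB, hmax⟩
    obtain ⟨x, y, hxy, rfl⟩ := Finset.card_eq_two.1 (hM B hB)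
    rcases Finset.mem_insert.1 hiB with rfl | hiy
    · refine ⟨y, (arc_mem_iff hM).2 ⟨?_, ?_⟩⟩
      · exact lt_of_le_of_ne (hmax y (by simp)) (Ne.symm hxy)
      · rwa [Finset.pair_comm]
    · obtain rfl : i = y := Finset.mem_singleton.1 hiy
      exact ⟨x, (arc_mem_iff hM).2 ⟨lt_of_le_of_ne (hmax x (by simp)) hxy, hB⟩⟩
  · rintro ⟨a, ha⟩
    obtain ⟨hai, hB⟩ := (arc_mem_iff hM).1 ha
    refine ⟨M.le hB (by simp), {a, i}, hB, by simp, ?_⟩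
    intro j hj
    rcases Finset.mem_insert.1 hj with rfl | hj
    · exact le_of_lt hai
    · rw [Finset.mem_singleton.1 hj]

lemma arcsOf_fst_inj {n : ℕ} {M : Finpartition (Finset.Icc 1 n)}
    (hM : ∀ B ∈ M.parts, B.card = 2) :
    ∀ e ∈ arcsOf M, ∀ f ∈ arcsOf M, e.1 = f.1 → e = f := by
  rintro ⟨a, b⟩ he ⟨c, d⟩ hf h
  dsimp at h
  subst h
  obtain ⟨hab, hBab⟩ := (arc_mem_iff hM).1 he
  obtain ⟨had, hBad⟩ := (arc_mem_iff hM).1 hf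
  have heq : ({a, b} : Finset ℕ) = {a, d} :=
    M.eq_of_mem_parts hBab hBad (Finset.mem_insert_self a _) (Finset.mem_insert_self a _)
  have hb : b ∈ ({a, d} : Finset ℕ) := heq ▸ (by simp)
  rcases Finset.mem_insert.1 hb with rfl | hb
  · exact absurd hab (lt_irrefl _)
  · rw [Finset.mem_singleton.1 hb]

lemma arcsOf_snd_inj {n : ℕ} {M : Finpartition (Finset.Icc 1 n)}
    (hM : ∀ B ∈ M.parts, B.card = 2) :
    ∀ e ∈ arcsOf M, ∀ f ∈ arcsOf M, e.2 = f.2 → e = f := by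
  rintro ⟨a, b⟩ he ⟨c, d⟩ hf h
  dsimp at h
  subst h
  obtain ⟨hab, hBab⟩ := (arc_mem_iff hM).1 he
  obtain ⟨hcb, hBcb⟩ := (arc_mem_iff hM).1 hf
  have heq : ({a, b} : Finset ℕ) = {c, b} :=
    M.eq_of_mem_parts hBab hBcb (Finset.mem_insert_of_mem (Finset.mem_singleton_self b)) (Finset.mem_insert_of_mem (Finset.mem_singleton_self b))
  have hc : c ∈ ({a, b} : Finset ℕ) := heq ▸ (by simp)
  rcases Finset.mem_insert.1 hc with rfl | hc
  · rfl
  · rw [Finset.mem_singleton.1 hc] at hcb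
    exact absurd hcb (lt_irrefl _)

lemma arcsOf_mem_matchSets {n : ℕ} {M : Finpartition (Finset.Icc 1 n)}
    (hM : ∀ B ∈ M.parts, B.card = 2) :
    arcsOf M ∈ matchSets (minsetOf M) (maxsetOf M) := by
  have hfst : (arcsOf M).image Prod.fst = minsetOf M := by
    ext i
    rw [Finset.mem_image, mem_minsetOf_iff_s15 hM]
    constructor
    · rintro ⟨e, he, rfl⟩
      exact ⟨e.2, by rwa [Prod.mk.eta]⟩
    · rintro ⟨b, hb⟩
      exact ⟨(i, b), hb, rfl⟩
  have hsnd : (arcsOf M).image Prod.snd = maxsetOf M := by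
    ext i
    rw [Finset.mem_image, mem_maxsetOf_iff_s15 hM]
    constructor
    · rintro ⟨e, he, rfl⟩
      exact ⟨e.1, by rwa [Prod.mk.eta]⟩
    · rintro ⟨a, ha⟩
      exact ⟨(a, i), ha, rfl⟩
  have hlt : ∀ e ∈ arcsOf M, e.1 < e.2 := by
    rintro ⟨a, b⟩ he
    exact ((arc_mem_iff hM).1 he).1
  have hinjf : Set.InjOn Prod.fst ((arcsOf M : Finset (ℕ × ℕ)) : Set (ℕ × ℕ)) := by
    intro e he f hf h
    exact arcsOf_fst_inj hM e (by exact_mod_cast he) f (by exact_mod_cast hf) h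
  have hinjs : Set.InjOn Prod.snd ((arcsOf M : Finset (ℕ × ℕ)) : Set (ℕ × ℕ)) := by
    intro e he f hf h
    exact arcsOf_snd_inj hM e (by exact_mod_cast he) f (by exact_mod_cast hf) h
  rw [mem_matchSets]
  refine ⟨?_, hlt, hfst, hsnd, ?_, ?_⟩
  · intro e he
    rw [Finset.mem_product]
    constructor
    · rw [← hfst]; exact Finset.mem_image_of_mem _ he
    · rw [← hsnd]; exact Finset.mem_image_of_mem _ he
  · rw [← hfst, Finset.card_image_of_injOn hinjf]
  · rw [← hsnd, Finset.card_image_of_injOn hinjs]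

lemma minset_inter_maxset {n : ℕ} {M : Finpartition (Finset.Icc 1 n)}
    (hM : ∀ B ∈ M.parts, B.card = 2) : minsetOf M ∩ maxsetOf M = ∅ := by
  rw [Finset.eq_empty_iff_forall_notMem]
  intro i hi
  rw [Finset.mem_inter] at hi
  obtain ⟨b, hb⟩ := (mem_minsetOf_iff_s15 hM).1 hi.1
  obtain ⟨a, ha⟩ := (mem_maxsetOf_iff_s15 hM).1 hi.2
  obtain ⟨hib, hBib⟩ := (arc_mem_iff hM).1 hb
  obtain ⟨hai, hBai⟩ := (arc_mem_iff hM).1 ha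
  have heq : ({i, b} : Finset ℕ) = {a, i} :=
    M.eq_of_mem_parts hBib hBai (Finset.mem_insert_self i _) (Finset.mem_insert_of_mem (Finset.mem_singleton_self i))
  have hbm : b ∈ ({a, i} : Finset ℕ) := heq ▸ (by simp)
  rcases Finset.mem_insert.1 hbm with rfl | hbm
  · omega
  · rw [Finset.mem_singleton.1 hbm] at hib
    exact absurd hib (lt_irrefl _)

lemma minset_union_maxset {n : ℕ} {M : Finpartition (Finset.Icc 1 n)}
    (hM : ∀ B ∈ M.parts, B.card = 2) : minsetOf M ∪ maxsetOf M = Finset.Icc 1 n := by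
  apply Finset.Subset.antisymm
  · apply Finset.union_subset
    · exact Finset.filter_subset _ _
    · exact Finset.filter_subset _ _
  · intro i hi
    obtain ⟨B, hB, hiB⟩ := M.exists_mem hi
    obtain ⟨x, y, hxy, rfl⟩ := Finset.card_eq_two.1 (hM B hB)
    rw [Finset.mem_union, mem_minsetOf_iff_s15 hM, mem_maxsetOf_iff_s15 hM]
    rcases Finset.mem_insert.1 hiB with rfl | hiy
    · rcases hxy.lt_or_gt with h | h
      · exact Or.inl ⟨y, (arc_mem_iff hM).2 ⟨h, hB⟩⟩
      · exact Or.inr ⟨y, (arc_mem_iff hM).2 ⟨h, by rwa [Finset.pair_comm]⟩⟩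
    · obtain rfl : i = y := Finset.mem_singleton.1 hiy
      rcases hxy.lt_or_gt with h | h
      · exact Or.inr ⟨x, (arc_mem_iff hM).2 ⟨h, hB⟩⟩
      · exact Or.inl ⟨x, (arc_mem_iff hM).2 ⟨h, by rwa [Finset.pair_comm]⟩⟩

lemma card_filter_le_succ (S : Finset ℕ) (r : ℕ) :
    (S.filter (fun x => x ≤ r + 1)).card
      = (S.filter (fun x => x ≤ r)).card + (if r + 1 ∈ S then 1 else 0) := by
  split_ifs with h
  · have : S.filter (fun x => x ≤ r + 1) = insert (r + 1) (S.filter (fun x => x ≤ r)) := by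
      ext x
      simp only [Finset.mem_filter, Finset.mem_insert]
      constructor
      · rintro ⟨hx, hxr⟩
        rcases Nat.lt_or_ge x (r + 1) with h' | h'
        · exact Or.inr ⟨hx, by omega⟩
        · exact Or.inl (by omega)
      · rintro (rfl | ⟨hx, hxr⟩)
        · exact ⟨h, le_refl _⟩
        · exact ⟨hx, by omega⟩
    rw [this, Finset.card_insert_of_notMem (by simp)]
  · have : S.filter (fun x => x ≤ r + 1) = S.filter (fun x => x ≤ r) := by
      ext x
      simp only [Finset.mem_filter]
      constructor
      · rintro ⟨hx, hxr⟩
        refine ⟨hx, ?_⟩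
        rcases Nat.lt_or_ge x (r + 1) with h' | h'
        · omega
        · exact absurd (show x = r + 1 by omega) (fun he => h (he ▸ hx))
      · rintro ⟨hx, hxr⟩
        exact ⟨hx, by omega⟩
    rw [this]
    omega

lemma pathHt_succ (S T : Finset ℕ) (k : ℕ) :
    pathHt S T (k + 1) = pathHt S T k + stepDelta S T (k + 1) := by
  unfold pathHt
  rw [Finset.sum_Icc_succ_top (by omega : 1 ≤ k + 1)]

lemma pathHt_even (S T : Finset ℕ) (h0S : 0 ∉ S) (h0T : 0 ∉ T) (r : ℕ) :
    pathHt S T (2 * r)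
      = ((S.filter (fun x => x ≤ r)).card : ℤ) - ((T.filter (fun x => x ≤ r)).card : ℤ) := by
  induction r with
  | zero =>
    have hS : S.filter (fun x => x ≤ 0) = ∅ := by
      rw [Finset.filter_eq_empty_iff]
      intro x hx
      intro hle
      exact h0S (by rwa [Nat.le_zero.1 hle] at hx)
    have hT : T.filter (fun x => x ≤ 0) = ∅ := by
      rw [Finset.filter_eq_empty_iff]
      intro x hx
      intro hle
      exact h0T (by rwa [Nat.le_zero.1 hle] at hx)
    show pathHt S T 0 = _
    unfold pathHt
    rw [hS, hT]
    simp
  | succ r ih =>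
    have e1 : 2 * (r + 1) = (2 * r + 1) + 1 := by ring
    rw [e1, pathHt_succ, show 2 * r + 1 = (2 * r) + 1 from rfl, pathHt_succ, ih]
    have hd1 : stepDelta S T (2 * r + 1) = (if r + 1 ∈ S then 0 else -1) := by
      unfold stepDelta
      rw [if_pos (by omega : (2 * r + 1) % 2 = 1),
        show (2 * r + 1 + 1) / 2 = r + 1 by omega]
    have hd2 : stepDelta S T (2 * r + 1 + 1) = (if r + 1 ∈ T then 0 else 1) := by
      unfold stepDelta
      rw [if_neg (by omega : ¬ (2 * r + 1 + 1) % 2 = 1),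
        show (2 * r + 1 + 1) / 2 = r + 1 by omega]
    rw [hd1, hd2, card_filter_le_succ S r, card_filter_le_succ T r]
    split_ifs <;> push_cast <;> ring

lemma pathHt_odd (S T : Finset ℕ) (r : ℕ) :
    pathHt S T (2 * r + 1) = pathHt S T (2 * r) + (if r + 1 ∈ S then 0 else -1) := by
  rw [pathHt_succ]
  congr 1
  unfold stepDelta
  rw [if_pos (by omega : (2 * r + 1) % 2 = 1),
    show (2 * r + 1 + 1) / 2 = r + 1 by omega]

lemma closers_le_openers {S T : Finset ℕ} {A : Finset (ℕ × ℕ)}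
    (hA : A ∈ matchSets S T) (r : ℕ) :
    (T.filter (fun x => x ≤ r)).card ≤ (S.filter (fun x => x ≤ r)).card := by
  obtain ⟨hsub, hlt, hfst, hsnd, hcS, hcT⟩ := mem_matchSets.1 hA
  have h1 : T.filter (fun x => x ≤ r) = (A.filter (fun e => e.2 ≤ r)).image Prod.snd := by
    rw [← hsnd, Finset.filter_image]
  have hsubset : ((A.filter (fun e => e.2 ≤ r) : Finset (ℕ × ℕ)) : Set (ℕ × ℕ))
      ⊆ (A : Set (ℕ × ℕ)) := by
    intro x hx
    exact Finset.mem_coe.2 (Finset.filter_subset _ _ (Finset.mem_coe.1 hx))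
  have h2 : (A.filter (fun e => e.2 ≤ r)).image Prod.fst ⊆ S.filter (fun x => x ≤ r) := by
    intro x hx
    obtain ⟨e, he, rfl⟩ := Finset.mem_image.1 hx
    have he' := Finset.mem_filter.1 he
    refine Finset.mem_filter.2 ⟨?_, le_trans (le_of_lt (hlt e he'.1)) he'.2⟩
    rw [← hfst]
    exact Finset.mem_image_of_mem _ he'.1
  calc (T.filter (fun x => x ≤ r)).card
      = (A.filter (fun e => e.2 ≤ r)).card := by
        rw [h1, Finset.card_image_of_injOn ((snd_injOn hA).mono hsubset)]
    _ = ((A.filter (fun e => e.2 ≤ r)).image Prod.fst).card := by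
        rw [Finset.card_image_of_injOn ((fst_injOn hA).mono hsubset)]
    _ ≤ (S.filter (fun x => x ≤ r)).card := Finset.card_le_card h2

lemma path_nonneg {n : ℕ} {S T : Finset ℕ} {A : Finset (ℕ × ℕ)}
    (hA : A ∈ matchSets S T) (hunion : S ∪ T = Finset.Icc 1 n) :
    ∀ k ≤ 2 * n, 0 ≤ pathHt S T k := by
  have h0S : 0 ∉ S := fun h => by
    have := hunion ▸ Finset.mem_union_left T h
    simp at this
  have h0T : 0 ∉ T := fun h => by
    have := hunion ▸ Finset.mem_union_right S h
    simp at this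
  intro k hk
  rcases Nat.even_or_odd k with ⟨r, hr⟩ | ⟨r, hr⟩
  · rw [show k = 2 * r by omega, pathHt_even S T h0S h0T]
    have := closers_le_openers hA r
    push_cast
    omega
  · rw [show k = 2 * r + 1 by omega, pathHt_odd, pathHt_even S T h0S h0T]
    split_ifs with h
    · have := closers_le_openers hA r
      push_cast
      omega
    · have hr1 : r + 1 ∈ T := by
        have hmem : r + 1 ∈ S ∪ T := by
          rw [hunion, Finset.mem_Icc]
          omega
        rcases Finset.mem_union.1 hmem with h' | h'
        · exact absurd h' h
        · exact h'
      have hc := closers_le_openers hA (r + 1)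
      have hTstep := card_filter_le_succ T r
      have hSstep := card_filter_le_succ S r
      rw [if_pos hr1] at hTstep
      rw [if_neg h] at hSstep
      push_cast
      omega

lemma hST_eq_hf {n : ℕ} {S T : Finset ℕ} (hS : S ⊆ Finset.Icc 1 n)
    (hT : T ⊆ Finset.Icc 1 n) (i : ℕ) : hST n S T i = hf S T i := by
  unfold hST hf
  have e1 : T ∩ Finset.Icc (i + 1) n = T.filter (fun x => i < x) := by
    ext x
    simp only [Finset.mem_inter, Finset.mem_Icc, Finset.mem_filter]
    constructor
    · rintro ⟨hx, h1, h2⟩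
      exact ⟨hx, by omega⟩
    · rintro ⟨hx, h1⟩
      have := Finset.mem_Icc.1 (hT hx)
      exact ⟨hx, by omega, this.2⟩
  have e2 : S ∩ Finset.Icc (i + 1) n = S.filter (fun x => i < x) := by
    ext x
    simp only [Finset.mem_inter, Finset.mem_Icc, Finset.mem_filter]
    constructor
    · rintro ⟨hx, h1, h2⟩
      exact ⟨hx, by omega⟩
    · rintro ⟨hx, h1⟩
      have := Finset.mem_Icc.1 (hS hx)
      exact ⟨hx, by omega, this.2⟩
  rw [e1, e2]

set_option maxHeartbeats 1000000 in
noncomputable def partOf (n : ℕ) (A : Finset (ℕ × ℕ)) : Finpartition (Finset.Icc 1 n) := by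
  classical
  exact if h : (A.image fun e => ({e.1, e.2} : Finset ℕ)).SupIndep id ∧
      (A.image fun e => ({e.1, e.2} : Finset ℕ)).sup id = Finset.Icc 1 n then
    by exact Finpartition.ofErase _ h.1 h.2
  else ⊤

lemma partOf_parts {n : ℕ} {S T : Finset ℕ} {A : Finset (ℕ × ℕ)}
    (hA : A ∈ matchSets S T) (hdisj : S ∩ T = ∅) (hunion : S ∪ T = Finset.Icc 1 n) :
    (partOf n A).parts = A.image fun e => ({e.1, e.2} : Finset ℕ) := by
  obtain ⟨hsub, hlt, hfst, hsnd, -, -⟩ := mem_matchSets.1 hA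
  have hST : ∀ x, x ∈ S → x ∈ T → False := by
    intro x h1 h2
    have := Finset.mem_inter.2 ⟨h1, h2⟩
    rw [hdisj] at this
    simp at this
  have hmemS : ∀ e ∈ A, e.1 ∈ S := fun e he => (Finset.mem_product.1 (hsub he)).1
  have hmemT : ∀ e ∈ A, e.2 ∈ T := fun e he => (Finset.mem_product.1 (hsub he)).2
  have key1 : (A.image fun e => ({e.1, e.2} : Finset ℕ)).SupIndep id := by
    rw [Finset.supIndep_iff_pairwiseDisjoint]
    intro B hB B' hB' hne
    obtain ⟨e, he, rfl⟩ := Finset.mem_image.1 (Finset.mem_coe.1 hB)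
    obtain ⟨f, hf, rfl⟩ := Finset.mem_image.1 (Finset.mem_coe.1 hB')
    simp only [Function.onFun, id]
    rw [Finset.disjoint_left]
    intro x hx1 hx2
    have hx1' : x = e.1 ∨ x = e.2 := by simpa using hx1
    have hx2' : x = f.1 ∨ x = f.2 := by simpa using hx2
    have hef : e = f := by
      rcases hx1' with rfl | rfl <;> rcases hx2' with h | h
      · exact fst_injOn hA (Finset.mem_coe.2 he) (Finset.mem_coe.2 hf) h
      · exact absurd (hST _ (hmemS e he) (h ▸ hmemT f hf)) not_false
      · exact absurd (hST _ (h ▸ hmemS f hf) (hmemT e he)) not_false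
      · exact snd_injOn hA (Finset.mem_coe.2 he) (Finset.mem_coe.2 hf) h
    exact hne (by rw [hef])
  have key2 : (A.image fun e => ({e.1, e.2} : Finset ℕ)).sup id = Finset.Icc 1 n := by
    ext x
    rw [Finset.mem_sup]
    constructor
    · rintro ⟨B, hB, hxB⟩
      obtain ⟨e, he, rfl⟩ := Finset.mem_image.1 hB
      have : x = e.1 ∨ x = e.2 := by simpa using hxB
      rcases this with rfl | rfl
      · rw [← hunion]
        exact Finset.mem_union_left _ (hmemS e he)
      · rw [← hunion]
        exact Finset.mem_union_right _ (hmemT e he)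
    · intro hx
      rw [← hunion] at hx
      rcases Finset.mem_union.1 hx with h | h
      · rw [← hfst] at h
        obtain ⟨e, he, rfl⟩ := Finset.mem_image.1 h
        exact ⟨{e.1, e.2}, Finset.mem_image_of_mem _ he, by simp⟩
      · rw [← hsnd] at h
        obtain ⟨e, he, rfl⟩ := Finset.mem_image.1 h
        exact ⟨{e.1, e.2}, Finset.mem_image_of_mem _ he, by simp⟩
  unfold partOf
  rw [dif_pos ⟨key1, key2⟩, Finpartition.ofErase_parts, Finset.erase_eq_of_notMem]
  intro hbot
  obtain ⟨e, he, heq⟩ := Finset.mem_image.1 hbot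
  have : e.1 ∈ (⊥ : Finset ℕ) := heq ▸ (by simp)
  simp at this

lemma partOf_perfect {n : ℕ} {S T : Finset ℕ} {A : Finset (ℕ × ℕ)}
    (hA : A ∈ matchSets S T) (hdisj : S ∩ T = ∅) (hunion : S ∪ T = Finset.Icc 1 n) :
    ∀ B ∈ (partOf n A).parts, B.card = 2 := by
  rw [partOf_parts hA hdisj hunion]
  intro B hB
  obtain ⟨e, he, rfl⟩ := Finset.mem_image.1 hB
  exact Finset.card_pair (ne_of_lt ((mem_matchSets.1 hA).2.1 e he))

lemma pair_eq_of {e : ℕ × ℕ} {a b : ℕ} (h1 : e.1 < e.2) (h2 : a < b)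
    (h : ({e.1, e.2} : Finset ℕ) = {a, b}) : e = (a, b) := by
  have ha : e.1 = a ∨ e.1 = b := by
    have : e.1 ∈ ({a, b} : Finset ℕ) := h ▸ (by simp)
    simpa using this
  have hb : e.2 = a ∨ e.2 = b := by
    have : e.2 ∈ ({a, b} : Finset ℕ) := h ▸ (by simp)
    simpa using this
  have : e.1 = a ∧ e.2 = b := by omega
  exact Prod.ext this.1 this.2

lemma arcsOf_partOf {n : ℕ} {S T : Finset ℕ} {A : Finset (ℕ × ℕ)}
    (hA : A ∈ matchSets S T) (hdisj : S ∩ T = ∅) (hunion : S ∪ T = Finset.Icc 1 n) :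
    arcsOf (partOf n A) = A := by
  have hlt := (mem_matchSets.1 hA).2.1
  ext ⟨a, b⟩
  rw [arc_mem_iff (partOf_perfect hA hdisj hunion), partOf_parts hA hdisj hunion]
  constructor
  · rintro ⟨hab, hmem⟩
    obtain ⟨e, he, heq⟩ := Finset.mem_image.1 hmem
    have := pair_eq_of (hlt e he) hab heq
    rwa [← this]
  · intro h
    exact ⟨hlt _ h, Finset.mem_image_of_mem _ h⟩

lemma partOf_arcsOf {n : ℕ} {M : Finpartition (Finset.Icc 1 n)}
    (hM : ∀ B ∈ M.parts, B.card = 2) : partOf n (arcsOf M) = M := by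
  have hA := arcsOf_mem_matchSets hM
  have hdisj := minset_inter_maxset hM
  have hunion := minset_union_maxset hM
  apply Finpartition.ext
  rw [partOf_parts hA hdisj hunion]
  ext B
  constructor
  · intro hB
    obtain ⟨e, he, rfl⟩ := Finset.mem_image.1 hB
    have he' : (e.1, e.2) ∈ arcsOf M := by rwa [Prod.mk.eta]
    exact ((arc_mem_iff hM).1 he').2
  · intro hB
    obtain ⟨x, y, hxy, rfl⟩ := Finset.card_eq_two.1 (hM B hB)
    rcases hxy.lt_or_gt with h | h
    · have : (x, y) ∈ arcsOf M := (arc_mem_iff hM).2 ⟨h, hB⟩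
      exact Finset.mem_image_of_mem _ this
    · have : (y, x) ∈ arcsOf M := (arc_mem_iff hM).2 ⟨h, by rwa [Finset.pair_comm]⟩
      have hmem := Finset.mem_image_of_mem (fun e : ℕ × ℕ => ({e.1, e.2} : Finset ℕ)) this
      simp only at hmem
      rwa [Finset.pair_comm y x] at hmem

lemma minsetOf_partOf {n : ℕ} {S T : Finset ℕ} {A : Finset (ℕ × ℕ)}
    (hA : A ∈ matchSets S T) (hdisj : S ∩ T = ∅) (hunion : S ∪ T = Finset.Icc 1 n) :
    minsetOf (partOf n A) = S := by
  have hfst := (mem_matchSets.1 hA).2.2.1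
  ext i
  rw [mem_minsetOf_iff_s15 (partOf_perfect hA hdisj hunion)]
  constructor
  · rintro ⟨b, hb⟩
    rw [arcsOf_partOf hA hdisj hunion] at hb
    rw [← hfst]
    exact Finset.mem_image_of_mem _ hb
  · intro hi
    rw [← hfst] at hi
    obtain ⟨e, he, rfl⟩ := Finset.mem_image.1 hi
    refine ⟨e.2, ?_⟩
    rw [arcsOf_partOf hA hdisj hunion, Prod.mk.eta]
    exact he

lemma maxsetOf_partOf {n : ℕ} {S T : Finset ℕ} {A : Finset (ℕ × ℕ)}
    (hA : A ∈ matchSets S T) (hdisj : S ∩ T = ∅) (hunion : S ∪ T = Finset.Icc 1 n) :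
    maxsetOf (partOf n A) = T := by
  have hsnd := (mem_matchSets.1 hA).2.2.2.1
  ext i
  rw [mem_maxsetOf_iff_s15 (partOf_perfect hA hdisj hunion)]
  constructor
  · rintro ⟨a, ha⟩
    rw [arcsOf_partOf hA hdisj hunion] at ha
    rw [← hsnd]
    exact Finset.mem_image_of_mem _ ha
  · intro hi
    rw [← hsnd] at hi
    obtain ⟨e, he, rfl⟩ := Finset.mem_image.1 hi
    refine ⟨e.1, ?_⟩
    rw [arcsOf_partOf hA hdisj hunion, Prod.mk.eta]
    exact he

theorem matchings_cr2_generating_function (m : ℕ) (hm : 1 ≤ m)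
    (R : Type*) [CommRing R] (y : R) :
    ∑ M ∈ (Finset.univ : Finset (Finpartition (Finset.Icc 1 (2 * m)))).filter
        (fun M => ∀ B ∈ M.parts, B.card = 2), y ^ cr2 (arcsOf M) =
      ∑ p ∈ ((Finset.Icc 1 (2 * m)).powerset ×ˢ (Finset.Icc 1 (2 * m)).powerset).filter
          (fun p => p.1 ∩ p.2 = ∅ ∧ p.1 ∪ p.2 = Finset.Icc 1 (2 * m) ∧
            p.1.card = m ∧ p.2.card = m ∧ ∀ k ≤ 4 * m, 0 ≤ pathHt p.1 p.2 k),
        ∏ i ∈ Finset.Icc 1 (2 * m) \ p.2, ∑ j ∈ Finset.range (hST (2 * m) p.1 p.2 i), y ^ j := by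
  have hmaps : ∀ M ∈ (Finset.univ : Finset (Finpartition (Finset.Icc 1 (2 * m)))).filter
      (fun M => ∀ B ∈ M.parts, B.card = 2),
      (minsetOf M, maxsetOf M) ∈
        ((Finset.Icc 1 (2 * m)).powerset ×ˢ (Finset.Icc 1 (2 * m)).powerset).filter
          (fun p => p.1 ∩ p.2 = ∅ ∧ p.1 ∪ p.2 = Finset.Icc 1 (2 * m) ∧
            p.1.card = m ∧ p.2.card = m ∧ ∀ k ≤ 4 * m, 0 ≤ pathHt p.1 p.2 k) := by
    intro M hMmem
    have hM : ∀ B ∈ M.parts, B.card = 2 := (Finset.mem_filter.1 hMmem).2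
    have hA := arcsOf_mem_matchSets hM
    have hdisj := minset_inter_maxset hM
    have hunion := minset_union_maxset hM
    obtain ⟨-, -, -, -, hc1, hc2⟩ := mem_matchSets.1 hA
    have hd : Disjoint (minsetOf M) (maxsetOf M) :=
      Finset.disjoint_iff_inter_eq_empty.2 hdisj
    have hU : (minsetOf M ∪ maxsetOf M).card = 2 * m := by
      rw [hunion, Nat.card_Icc]
      omega
    have hcc := Finset.card_union_of_disjoint hd
    have hcS : (minsetOf M).card = m := by omega
    have hcT : (maxsetOf M).card = m := by omega
    refine Finset.mem_filter.2 ⟨Finset.mem_product.2 ⟨Finset.mem_powerset.2 ?_,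
      Finset.mem_powerset.2 ?_⟩, hdisj, hunion, hcS, hcT, ?_⟩
    · intro x hx
      rw [← hunion]
      exact Finset.mem_union_left _ hx
    · intro x hx
      rw [← hunion]
      exact Finset.mem_union_right _ hx
    · intro k hk
      exact path_nonneg hA hunion k (by omega)
  rw [← Finset.sum_fiberwise_of_maps_to hmaps (fun M => y ^ cr2 (arcsOf M))]
  apply Finset.sum_congr rfl
  rintro ⟨S, T⟩ hp
  obtain ⟨hprod, hdisj, hunion, hcS, hcT, hpath⟩ := Finset.mem_filter.1 hp
  have hSsub : S ⊆ Finset.Icc 1 (2 * m) := by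
    intro x hx
    rw [← hunion]
    exact Finset.mem_union_left _ hx
  have hTsub : T ⊆ Finset.Icc 1 (2 * m) := by
    intro x hx
    rw [← hunion]
    exact Finset.mem_union_right _ hx
  have step1 : ∑ M ∈ ((Finset.univ : Finset (Finpartition (Finset.Icc 1 (2 * m)))).filter
      (fun M => ∀ B ∈ M.parts, B.card = 2)).filter
        (fun M => (minsetOf M, maxsetOf M) = (S, T)),
      y ^ cr2 (arcsOf M) = ∑ A ∈ matchSets S T, y ^ cr2 A := by
    refine Finset.sum_bij' (fun M _ => arcsOf M) (fun A _ => partOf (2 * m) A)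
      ?_ ?_ ?_ ?_ ?_
    · intro M hMf
      obtain ⟨hMperf, hkey⟩ := Finset.mem_filter.1 hMf
      have hM : ∀ B ∈ M.parts, B.card = 2 := (Finset.mem_filter.1 hMperf).2
      have h1 : minsetOf M = S := (Prod.mk.injEq _ _ _ _ ▸ hkey).1
      have h2 : maxsetOf M = T := (Prod.mk.injEq _ _ _ _ ▸ hkey).2
      show arcsOf M ∈ matchSets S T
      rw [← h1, ← h2]
      exact arcsOf_mem_matchSets hM
    · intro A hA
      refine Finset.mem_filter.2 ⟨Finset.mem_filter.2 ⟨Finset.mem_univ _,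
        partOf_perfect hA hdisj hunion⟩, ?_⟩
      rw [minsetOf_partOf hA hdisj hunion, maxsetOf_partOf hA hdisj hunion]
    · intro M hMf
      obtain ⟨hMperf, -⟩ := Finset.mem_filter.1 hMf
      exact partOf_arcsOf (Finset.mem_filter.1 hMperf).2
    · intro A hA
      exact arcsOf_partOf hA hdisj hunion
    · intro M _
      rfl
  rw [step1, core_sum y m S T hcS hcT]
  have hIccT : Finset.Icc 1 (2 * m) \ T = S := by
    rw [← hunion, Finset.union_sdiff_right]
    exact sdiff_eq_self_iff_disjoint.2
      (Finset.disjoint_iff_inter_eq_empty.2 hdisj).symm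
  rw [hIccT]
  apply Finset.prod_congr rfl
  intro a _
  rw [hST_eq_hf hSsub hTsub a]
end

section
/- Let w be a word of distinct positive integers and a a letter not in w, with σ = wa. Then Foata's second fundamental transformation Φ satisfies inv(Φ(σ)) = maj(σ), where Φ is defined recursively by Φ(u) = u for |u| = 1 and Φ(w a) = γ_a(Φ(w)) a, with γ_a defined via the a-factorization: if the last letter of w is less than a, write w = v₁b₁⋯v_p b_p where each bᵢ < a and each vᵢ is a (possibly empty) word of letters > a; if the last letter of w is greater than a, write w = v₁b₁⋯v_p b_p where each bᵢ > a and each vᵢ consists of letters < a; in both cases γ_a(w) = b₁v₁⋯b_p v_p. -/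
open Finset
open scoped Classical

/-- γ_a(w): via the a-factorization w = v₁b₁⋯v_p b_p (the bᵢ are the letters on the same
side of a as the last letter of w), γ_a(w) = b₁v₁⋯b_p v_p. -/
def gammaA (a : ℕ) (w : List ℕ) : List ℕ :=
  match w.getLast? with
  | none => []
  | some t =>
    (w.foldl (fun (st : List ℕ × List ℕ) x =>
        if decide (x < a) = decide (t < a) then (st.1 ++ [x] ++ st.2.reverse, [])
        else (st.1, x :: st.2)) ([], [])).1

/-- Foata's second fundamental transformation, defined on the reversed word:
Φ(wa) = γ_a(Φ(w))a. -/
def foataRev : List ℕ → List ℕ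
  | [] => []
  | a :: rest => gammaA a (foataRev rest) ++ [a]

/-- Foata's second fundamental transformation -/
def foata (w : List ℕ) : List ℕ := foataRev w.reverse

/-! Write `Φ(w) = v t`, where `t` is the last letter of `w`. In the `a`-factorization of `v t`
every `vᵢ` lies on the other side of `a` from `bᵢ`, so moving `bᵢ` in front of `vᵢ` changes
the inversion number by `|vᵢ|`: it destroys `|vᵢ|` inversions if `t < a` and creates as many
if `t > a`. Appending `a` then adds one inversion per letter larger than `a`. If `t < a` the
two effects cancel and `maj(w a) = maj(w)`; if `t > a` the net gain is `|w|`, the new descent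
of `w a`.
-/
theorem invList_nil : invList [] = 0 := rfl

theorem invList_cons (x : ℕ) (l : List ℕ) :
    invList (x :: l) = l.countP (· < x) + invList l := by
  have hcount : l.countP (· < x) = ∑ j ∈ range l.length, if l.getD j 0 < x then 1 else 0 := by
    induction l with
    | nil => simp
    | cons y l ih =>
      rw [List.countP_cons, List.length_cons, sum_range_succ']
      simp [ih, add_comm]
  simp only [invList, card_filter, sum_product, List.length_cons, sum_range_succ']
  simp [hcount, add_comm]

theorem invList_append_cons (l₁ l₂ : List ℕ) (x : ℕ) :
    invList (l₁ ++ x :: l₂) =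
      invList (l₁ ++ l₂) + l₁.countP (x < ·) + l₂.countP (· < x) := by
  induction l₁ with
  | nil => simp [invList_cons]; omega
  | cons y l₁ ih =>
    simp only [List.cons_append, invList_cons, List.countP_append, List.countP_cons, ih]
    by_cases h : x < y <;> by_cases h' : y < x <;> simp [h] <;> omega

theorem invList_append_singleton (l : List ℕ) (x : ℕ) :
    invList (l ++ [x]) = invList l + l.countP (x < ·) := by
  simpa using invList_append_cons l [] x

theorem majList_append_pair (u : List ℕ) (t a : ℕ) :
    majList (u ++ [t, a]) = majList (u ++ [t]) + if a < t then u.length + 1 else 0 := by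
  have hprefix : ∀ i ≤ u.length, (u ++ [t, a]).getD i 0 = (u ++ [t]).getD i 0 := by
    intro i hi
    rcases hi.lt_or_eq with hi | rfl
    · rw [List.getD_append _ _ _ _ hi, List.getD_append _ _ _ _ hi]
    · simp
  simp only [majList, List.length_append, List.length_cons, List.length_nil]
  rw [show u.length + (1 + 1) - 1 = u.length + 1 by omega, sum_range_succ,
    show u.length + (0 + 1) - 1 = u.length by omega]
  congr 1
  · exact sum_congr rfl fun i hi => by
      rw [mem_range] at hi; rw [hprefix i hi.le, hprefix (i + 1) hi]
  · simp

theorem countP_lt_add_countP_gt {l : List ℕ} {a : ℕ} (ha : a ∉ l) :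
    l.countP (· < a) + l.countP (a < ·) = l.length := by
  rw [List.length_eq_countP_add_countP (· < a)]
  congr 1
  refine List.countP_congr fun y hy => ?_
  have : y ≠ a := fun h => ha (h ▸ hy)
  simp only [decide_eq_true_eq, not_lt]
  omega

section Gamma

variable (a t : ℕ)

/-- The step of the fold in `gammaA a (v ++ [t])`: the state is the output so far and,
reversed, the pending block of letters on the other side of `a` from `t`. -/
def gammaStep (st : List ℕ × List ℕ) (x : ℕ) : List ℕ × List ℕ :=
  if decide (x < a) = decide (t < a) then (st.1 ++ [x] ++ st.2.reverse, []) else (st.1, x :: st.2)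

def gammaFold (v : List ℕ) : List ℕ × List ℕ :=
  v.foldl (gammaStep a t) ([], [])

theorem gammaFold_nil : gammaFold a t [] = ([], []) := rfl

theorem gammaFold_append_singleton (v : List ℕ) (x : ℕ) :
    gammaFold a t (v ++ [x]) = gammaStep a t (gammaFold a t v) x :=
  List.foldl_concat ..

def countOppositeSide (l : List ℕ) : ℕ :=
  l.countP fun y => decide (y < a) ≠ decide (t < a)

theorem gammaA_append_singleton (v : List ℕ) :
    gammaA a (v ++ [t]) = (gammaFold a t v).1 ++ t :: (gammaFold a t v).2.reverse := by
  rw [gammaA, List.getLast?_concat]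
  change (gammaFold a t (v ++ [t])).1 = _
  rw [gammaFold_append_singleton]
  simp only [gammaStep, if_true, List.append_assoc, List.singleton_append]

theorem gammaFold_perm (v : List ℕ) :
    ((gammaFold a t v).1 ++ (gammaFold a t v).2.reverse).Perm v := by
  induction v using List.reverseRecOn with
  | nil => simp [gammaFold_nil]
  | append_singleton v x ih =>
    rw [gammaFold_append_singleton]
    generalize gammaFold a t v = st at ih
    unfold gammaStep
    split_ifs
    · simpa using List.perm_middle.trans ((List.perm_cons x).2 ih) |>.trans
        (List.perm_append_singleton x v).symm
    · simpa using ih.append_right [x]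

theorem gammaFold_pending (v : List ℕ) :
    ∀ y ∈ (gammaFold a t v).2, decide (y < a) ≠ decide (t < a) := by
  induction v using List.reverseRecOn with
  | nil => simp [gammaFold_nil]
  | append_singleton v x ih =>
    rw [gammaFold_append_singleton]
    generalize gammaFold a t v = st at ih
    unfold gammaStep
    split_ifs with hx
    · simp
    · intro y hy
      rcases List.mem_cons.1 hy with rfl | hy
      exacts [hx, ih y hy]

theorem lt_of_oppositeSide {x y : ℕ} (hx : decide (x < a) = decide (t < a))
    (hy : decide (y < a) ≠ decide (t < a)) : if t < a then x < y else y < x := by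
  split_ifs with ht <;> simp [ht] at hx hy <;> omega

theorem invList_append_cons_of_oppositeSide (d p : List ℕ) {x : ℕ}
    (hx : decide (x < a) = decide (t < a)) (hp : ∀ y ∈ p, decide (y < a) ≠ decide (t < a)) :
    (invList (d ++ x :: p) : ℤ) =
      invList (d ++ p ++ [x]) + (if t < a then -1 else 1) * p.length := by
  rw [invList_append_cons, invList_append_singleton, List.countP_append]
  have hside := fun y hy => lt_of_oppositeSide a t hx (hp y hy)
  by_cases ht : t < a
  · simp only [ht, if_true] at hside
    have h₁ : p.countP (· < x) = 0 :=
      List.countP_eq_zero.2 fun y hy => by simpa using (hside y hy).le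
    have h₂ : p.countP (x < ·) = p.length :=
      List.countP_eq_length.2 fun y hy => by simpa using hside y hy
    rw [h₁, h₂, if_pos ht]
    push_cast; ring
  · simp only [ht, if_false] at hside
    have h₁ : p.countP (· < x) = p.length :=
      List.countP_eq_length.2 fun y hy => by simpa using hside y hy
    have h₂ : p.countP (x < ·) = 0 :=
      List.countP_eq_zero.2 fun y hy => by simpa using (hside y hy).le
    rw [h₁, h₂, if_neg ht]
    push_cast; ring

theorem invList_gammaFold (v : List ℕ) :
    (invList ((gammaFold a t v).1 ++ (gammaFold a t v).2.reverse) : ℤ) =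
      invList v + (if t < a then -1 else 1) * countOppositeSide a t (gammaFold a t v).1 := by
  induction v using List.reverseRecOn with
  | nil => simp [gammaFold_nil, invList_nil, countOppositeSide]
  | append_singleton v x ih =>
    have hperm := gammaFold_perm a t v
    have hpending := gammaFold_pending a t v
    rw [gammaFold_append_singleton, invList_append_singleton, ← hperm.countP_eq]
    generalize gammaFold a t v = st at ih hperm hpending
    obtain ⟨d, p⟩ := st
    dsimp only at ih hpending ⊢
    by_cases hx : decide (x < a) = decide (t < a)
    · have hopp : countOppositeSide a t p.reverse = p.length := by
        simpa [countOppositeSide] using hpending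
      simp only [gammaStep, if_pos hx, List.append_assoc, List.singleton_append, List.reverse_nil,
        List.append_nil]
      rw [invList_append_cons_of_oppositeSide a t d p.reverse hx (by simpa using hpending),
        invList_append_singleton]
      simp only [countOppositeSide, List.countP_append, List.countP_cons, hx, ne_eq,
        not_true_eq_false, decide_false, Bool.false_eq_true, if_false] at hopp ih ⊢
      push_cast [ih, hopp, List.length_reverse]
      ring
    · simp only [gammaStep, if_neg hx, List.reverse_cons, ← List.append_assoc,
        invList_append_singleton]
      push_cast [ih]
      ring

theorem gammaA_perm (w : List ℕ) : (gammaA a w).Perm w := by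
  rcases List.eq_nil_or_concat w with rfl | ⟨v, b, rfl⟩
  · rfl
  · rw [List.concat_eq_append, gammaA_append_singleton]
    exact (List.perm_middle.trans ((List.perm_cons b).2 (gammaFold_perm a b v))).trans
      (List.perm_append_singleton b v).symm

theorem invList_gammaA (v : List ℕ) :
    (invList (gammaA a (v ++ [t])) : ℤ) =
      invList (v ++ [t]) + (if t < a then -1 else 1) * countOppositeSide a t v := by
  have hperm := gammaFold_perm a t v
  have hopp : countOppositeSide a t v =
      countOppositeSide a t (gammaFold a t v).1 + (gammaFold a t v).2.length := by
    have hpending : countOppositeSide a t (gammaFold a t v).2 = (gammaFold a t v).2.length := by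
      simpa [countOppositeSide] using gammaFold_pending a t v
    rw [← hpending, countOppositeSide, ← hperm.countP_eq, List.countP_append,
      List.countP_reverse]
    rfl
  rw [gammaA_append_singleton, invList_append_cons_of_oppositeSide a t _ _ rfl
      (by simpa using gammaFold_pending a t v),
    invList_append_singleton, invList_append_singleton, hperm.countP_eq, hopp]
  push_cast [invList_gammaFold, List.length_reverse]
  ring

theorem invList_gammaA_of_lt {v : List ℕ} (ht : t < a) (ha : a ∉ v) :
    invList (gammaA a (v ++ [t])) + v.countP (a < ·) = invList (v ++ [t]) := by
  have hopp : countOppositeSide a t v = v.countP (a < ·) := List.countP_congr fun y hy => by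
    have : y ≠ a := fun h => ha (h ▸ hy)
    simp only [ht, decide_true, ne_eq, decide_eq_true_eq, not_lt]
    omega
  have := invList_gammaA a t v
  rw [if_pos ht, hopp] at this
  omega

theorem invList_gammaA_of_gt {v : List ℕ} (ht : a < t) :
    invList (gammaA a (v ++ [t])) = invList (v ++ [t]) + v.countP (· < a) := by
  have hopp : countOppositeSide a t v = v.countP (· < a) := List.countP_congr fun y _ => by
    simp only [show ¬t < a by omega, decide_false, ne_eq, decide_eq_false_iff_not, not_lt, not_le,
      decide_eq_true_eq]
  have := invList_gammaA a t v
  rw [if_neg (by omega), hopp] at this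
  omega

end Gamma

theorem foata_append_singleton (w : List ℕ) (a : ℕ) :
    foata (w ++ [a]) = gammaA a (foata w) ++ [a] := by
  simp [foata, foataRev]

theorem foata_perm (w : List ℕ) : (foata w).Perm w := by
  induction w using List.reverseRecOn with
  | nil => rfl
  | append_singleton w a ih =>
    rw [foata_append_singleton]
    exact ((gammaA_perm a _).trans ih).append_right [a]

theorem invList_foata {w : List ℕ} (hw : w.Nodup) : invList (foata w) = majList w := by
  induction w using List.reverseRecOn with
  | nil => rfl
  | append_singleton w a ih =>
    obtain ⟨haw, hwn⟩ := List.nodup_cons.1 (List.nodup_append_comm.1 hw)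
    rcases List.eq_nil_or_concat w with rfl | ⟨u, t, rfl⟩
    · rfl
    rw [List.concat_eq_append] at *
    obtain ⟨v, hv⟩ : ∃ v, foata (u ++ [t]) = v ++ [t] := ⟨_, foata_append_singleton u t⟩
    have hperm : (v ++ [t]).Perm (u ++ [t]) := hv ▸ foata_perm _
    have hav : a ∉ v := fun h => haw (hperm.subset (by simp [h]))
    have hlen : v.length = u.length := by simpa using hperm.length_eq
    have hta : t ≠ a := fun h => haw (by simp [h])
    rw [foata_append_singleton, invList_append_singleton, (gammaA_perm a _).countP_eq, hv,
      List.append_assoc, List.singleton_append, majList_append_pair, ← ih hwn, hv,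
      List.countP_append, List.countP_singleton]
    rcases lt_or_gt_of_ne hta with ht | ht
    · have := invList_gammaA_of_lt a t ht hav
      simp only [decide_eq_true_eq, if_neg (show ¬a < t by omega)]
      omega
    · have := invList_gammaA_of_gt a t (v := v) ht
      have := countP_lt_add_countP_gt hav
      simp only [decide_eq_true_eq, if_pos ht]
      omega

theorem foata_inv_eq_maj_general (w : List ℕ) (a : ℕ)
    (hnd : (w ++ [a]).Nodup) :
    invList (foata (w ++ [a])) = majList (w ++ [a]) :=
  invList_foata hnd

theorem foata_inv_eq_maj (w : List ℕ) (a : ℕ)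
    (hpos : ∀ x ∈ w ++ [a], 0 < x) (hnd : (w ++ [a]).Nodup) :
    invList (foata (w ++ [a])) = majList (w ++ [a]) :=
  foata_inv_eq_maj_general w a hnd
end

section
/- Let P be a partition of [n] (with standard representation 𝒢_P) and let M(P) be the matching obtained from P by splitting each vertex i that is both a right-hand and a left-hand endpoint into two adjacent vertices i⁰ < i¹ (the arc ending at i now ends at i⁰, and the arc starting at i now starts at i¹) and deleting isolated vertices. Then Cr₂(P) = Cr₂(M(P)) and pmaj(P) = pmaj(M(P)). -/
open Finset
open scoped Classical

/-- the matching M(P) obtained from the arc set of a partition by splitting each vertex i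
that is both a right-hand and a left-hand endpoint into i⁰ = i < i¹ = i + 1/2 -/
noncomputable def splitArcs (A : Finset (ℕ × ℕ)) : Finset (ℚ × ℚ) :=
  A.image (fun e =>
    ((if ∃ f ∈ A, f.2 = e.1 then (e.1 : ℚ) + 1/2 else (e.1 : ℚ)), (e.2 : ℚ)))

/-!
Splitting moves every left endpoint `x` to `splitVertex x` (`x + 1/2` if `x` is also a right
endpoint, `x` otherwise) and keeps right endpoints. This map is strictly monotone and
`splitVertex x < y ↔ x < y`, so every comparison between endpoints seen by `cr2` and by the
labels is unchanged. In the `pmaj` fold, processing a vertex `i` means deleting the arcs that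
start at `i` and then prepending the (unique) arc that ends there; after splitting, the deletion
happens at `i + 1/2` and the prepending at `i`, which are visited in this order.
-/

section Crossings

variable {α β : Type*} [LinearOrder α] [LinearOrder β]

lemma cr2_image_prodMap {l r : α → β} (hl : StrictMono l) (hr : StrictMono r)
    (hlr : ∀ x y, l x < r y ↔ x < y) (A : Finset (α × α)) :
    cr2 (A.image (Prod.map l r)) = cr2 A := by
  have hinj : Function.Injective (Prod.map (Prod.map l r) (Prod.map l r)) :=
    (hl.injective.prodMap hr.injective).prodMap (hl.injective.prodMap hr.injective)
  rw [cr2, ← prodMap_image_product, filter_image, card_image_of_injective _ hinj]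
  simp only [Prod.map_fst, Prod.map_snd, hl.lt_iff_lt, hr.lt_iff_lt, hlr]
  rfl

lemma labelArc_image_prodMap {l r : α → β} (hl : StrictMono l) (hr : Function.Injective r)
    (A : Finset (α × α)) (e : α × α) :
    labelArc (A.image (Prod.map l r)) (Prod.map l r e) = labelArc A e := by
  rw [labelArc, filter_image, card_image_of_injective _ (hl.injective.prodMap hr)]
  simp only [Prod.map_fst, hl.lt_iff_lt]
  rfl

end Crossings

section PMajStep

variable {α β : Type*} [LinearOrder α] [LinearOrder β]

def arcEndpoints (B : Finset (α × α)) : Finset α := B.image Prod.fst ∪ B.image Prod.snd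

noncomputable def pmajStep (B : Finset (α × α)) (st : List (α × α) × ℕ) (i : α) :
    List (α × α) × ℕ :=
  let σ₁ := st.1.filter (fun e => e.1 ≠ i)
  let ends := (B.filter (fun e => e.2 = i)).toList
  let σ₂ := ends ++ σ₁
  (σ₂, st.2 + if ends.isEmpty then 0 else desList (σ₂.map (labelArc B)))

lemma arcEndpoints_image_prodMap (l r : α → β) (A : Finset (α × α)) :
    arcEndpoints (A.image (Prod.map l r)) =
      (A.image Prod.fst).image l ∪ (A.image Prod.snd).image r := by
  simp only [arcEndpoints, image_image]
  rfl

lemma pmajArcs_eq_foldl (B : Finset (α × α)) :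
    pmajArcs B = (((arcEndpoints B).sort (· ≤ ·)).reverse.foldl (pmajStep B) ([], 0)).2 := rfl

lemma pmajStep_of_forall_snd_ne {B : Finset (α × α)} {i : α} (hi : ∀ e ∈ B, e.2 ≠ i)
    (σ : List (α × α)) (c : ℕ) :
    pmajStep B (σ, c) i = (σ.filter (fun e => e.1 ≠ i), c) := by
  have : B.filter (fun e => e.2 = i) = ∅ := filter_eq_empty_iff.2 hi
  simp [pmajStep, this]

lemma pmajStep_filter_fst_ne (B : Finset (α × α)) (i : α) (σ : List (α × α)) (c : ℕ) :
    pmajStep B (σ.filter (fun e => e.1 ≠ i), c) i = pmajStep B (σ, c) i := by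
  simp [pmajStep, List.filter_filter]

lemma forall_mem_pmajStep {A : Finset (α × α)} {σ : List (α × α)} (hσ : ∀ e ∈ σ, e ∈ A)
    (c : ℕ) (i : α) : ∀ e ∈ (pmajStep A (σ, c) i).1, e ∈ A := by
  intro e he
  simp only [pmajStep, List.mem_append, mem_toList, mem_filter] at he
  exact he.elim And.left fun h => hσ e (List.mem_of_mem_filter h)

lemma toList_image_of_card_le_one {γ δ : Type*} [DecidableEq δ] {s : Finset γ} (f : γ → δ)
    (hs : s.card ≤ 1) : (s.image f).toList = s.toList.map f := by
  obtain h | h := Nat.le_one_iff_eq_zero_or_eq_one.mp hs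
  · simp [card_eq_zero.mp h]
  · obtain ⟨a, rfl⟩ := card_eq_one.mp h
    simp

lemma pmajStep_image {A : Finset (α × α)} (hA : Set.InjOn Prod.snd (A : Set (α × α)))
    {φ : α × α → β × β}
    (hlabel : ∀ e, labelArc (A.image φ) (φ e) = labelArc A e) {i : α} {j : β}
    (hends : ∀ e ∈ A, (φ e).2 = j ↔ e.2 = i) {σ : List (α × α)}
    (hfilter : (σ.map φ).filter (fun e => e.1 ≠ j) = (σ.filter (fun e => e.1 ≠ i)).map φ)
    (c : ℕ) :
    pmajStep (A.image φ) (σ.map φ, c) j = Prod.map (List.map φ) id (pmajStep A (σ, c) i) := by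
  have hcard : (A.filter (fun e => e.2 = i)).card ≤ 1 :=
    card_le_one.2 fun a ha b hb => hA (mem_filter.1 ha).1 (mem_filter.1 hb).1
      ((mem_filter.1 ha).2.trans (mem_filter.1 hb).2.symm)
  have hends' : ((A.image φ).filter (fun e => e.2 = j)).toList
      = (A.filter (fun e => e.2 = i)).toList.map φ := by
    rw [filter_image, filter_congr hends, toList_image_of_card_le_one φ hcard]
  have hlabel' : labelArc (A.image φ) ∘ φ = labelArc A := funext hlabel
  simp only [pmajStep, hends', hfilter, ← List.map_append, List.isEmpty_map, List.map_map,
    hlabel', Prod.map, id]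

end PMajStep

lemma List.foldl_flatMap_semiconj {ι κ γ δ : Type*} (f : ι → List κ) (opA : γ → ι → γ)
    (opB : δ → κ → δ) (π : γ → δ) (inv : γ → Prop) (hinv : ∀ s i, inv s → inv (opA s i))
    (hstep : ∀ s i, inv s → (f i).foldl opB (π s) = π (opA s i)) (l : List ι) (s : γ)
    (hs : inv s) : (l.flatMap f).foldl opB (π s) = π (l.foldl opA s) := by
  induction l generalizing s with
  | nil => rfl
  | cons i l ih => simp only [List.flatMap_cons, List.foldl_append, List.foldl_cons,
      hstep s i hs, ih _ (hinv s i hs)]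

lemma Nat.cast_ne_cast_add_half (a b : ℕ) : (a : ℚ) ≠ b + 1 / 2 := by
  intro h
  have : ((2 * a : ℕ) : ℚ) = ((2 * b + 1 : ℕ) : ℚ) := by push_cast; linarith
  have := Nat.cast_injective this
  omega

section Split

variable (A : Finset (ℕ × ℕ))

noncomputable def splitVertex (x : ℕ) : ℚ := if x ∈ A.image Prod.snd then x + 1 / 2 else x

lemma splitArcs_eq_image : splitArcs A = A.image (Prod.map (splitVertex A) (↑)) := by
  simp [splitArcs, splitVertex, Prod.map_def]

variable {A}

lemma cast_le_splitVertex (x : ℕ) : (x : ℚ) ≤ splitVertex A x := by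
  unfold splitVertex; split_ifs <;> linarith

lemma splitVertex_le (x : ℕ) : splitVertex A x ≤ x + 1 / 2 := by
  unfold splitVertex; split_ifs <;> linarith

lemma splitVertex_lt_cast_iff {x y : ℕ} : splitVertex A x < y ↔ x < y := by
  constructor
  · intro h; exact_mod_cast (cast_le_splitVertex x).trans_lt h
  · intro h
    have : (x : ℚ) + 1 ≤ y := by exact_mod_cast h
    linarith [splitVertex_le (A := A) x]

variable (A) in
lemma splitVertex_strictMono : StrictMono (splitVertex A) := fun x y h => by
  have : (x : ℚ) + 1 ≤ y := by exact_mod_cast h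
  linarith [splitVertex_le (A := A) x, cast_le_splitVertex (A := A) y]

lemma splitVertex_ne_cast {x i : ℕ} (hi : i ∈ A.image Prod.snd) : splitVertex A x ≠ i := by
  unfold splitVertex
  split_ifs with hx
  · exact (Nat.cast_ne_cast_add_half i x).symm
  · exact fun h => hx (Nat.cast_injective h ▸ hi)

variable (A) in
noncomputable def splitFiber (i : ℕ) : List ℚ :=
  (if i ∈ A.image Prod.snd then [(i : ℚ)] else []) ++
    (if i ∈ A.image Prod.fst then [splitVertex A i] else [])

lemma mem_splitFiber {i : ℕ} {x : ℚ} : x ∈ splitFiber A i ↔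
    (i ∈ A.image Prod.snd ∧ x = i) ∨ (i ∈ A.image Prod.fst ∧ x = splitVertex A i) := by
  unfold splitFiber; split_ifs <;> simp [*]

lemma pairwise_splitFiber (i : ℕ) : (splitFiber A i).Pairwise (· < ·) := by
  unfold splitFiber
  split_ifs with hr <;> simp [splitVertex, *]

lemma lt_of_mem_splitFiber {i j : ℕ} (hij : i < j) {x y : ℚ} (hx : x ∈ splitFiber A i)
    (hy : y ∈ splitFiber A j) : x < y := by
  have hx' : x ≤ i + 1 / 2 := by
    obtain ⟨-, rfl⟩ | ⟨-, rfl⟩ := mem_splitFiber.1 hx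
    · linarith
    · exact splitVertex_le i
  have hy' : (j : ℚ) ≤ y := by
    obtain ⟨-, rfl⟩ | ⟨-, rfl⟩ := mem_splitFiber.1 hy
    · rfl
    · exact cast_le_splitVertex j
  have : (i : ℚ) + 1 ≤ j := by exact_mod_cast hij
  linarith

variable (A) in
lemma sort_arcEndpoints_splitArcs :
    (arcEndpoints (splitArcs A)).sort (· ≤ ·) =
      ((arcEndpoints A).sort (· ≤ ·)).flatMap (splitFiber A) := by
  refine (sortedLT_sort _).eq_of_mem_iff (List.Pairwise.sortedLT ?_) fun x => ?_
  · exact List.pairwise_flatMap.2 ⟨fun i _ => pairwise_splitFiber i,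
      (sortedLT_sort _).pairwise.imp fun hij _ hx _ hy => lt_of_mem_splitFiber hij hx hy⟩
  · rw [mem_sort, splitArcs_eq_image, arcEndpoints_image_prodMap]
    simp only [List.mem_flatMap, mem_sort, mem_splitFiber, arcEndpoints]
    constructor
    · rw [mem_union]
      rintro (h | h) <;> obtain ⟨i, hi, rfl⟩ := mem_image.1 h
      exacts [⟨i, mem_union_left _ hi, .inr ⟨hi, rfl⟩⟩, ⟨i, mem_union_right _ hi, .inl ⟨hi, rfl⟩⟩]
    · rw [mem_union]
      rintro ⟨i, -, ⟨hi, rfl⟩ | ⟨hi, rfl⟩⟩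
      exacts [.inr (mem_image_of_mem _ hi), .inl (mem_image_of_mem _ hi)]

lemma reverse_splitFiber (i : ℕ) : (splitFiber A i).reverse =
    (if i ∈ A.image Prod.fst then [splitVertex A i] else []) ++
      (if i ∈ A.image Prod.snd then [(i : ℚ)] else []) := by
  unfold splitFiber; split_ifs <;> rfl

lemma cast_snd_ne_splitVertex {a : ℕ × ℕ} (ha : a ∈ A) (x : ℕ) :
    (a.2 : ℚ) ≠ splitVertex A x := by
  unfold splitVertex
  split_ifs with hx
  · exact Nat.cast_ne_cast_add_half a.2 x
  · exact fun h => hx (Nat.cast_injective h ▸ mem_image_of_mem _ ha)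

lemma foldl_reverse_splitFiber (hA : Set.InjOn Prod.snd (A : Set (ℕ × ℕ))) (i : ℕ)
    {σ : List (ℕ × ℕ)} (hσ : ∀ e ∈ σ, e ∈ A) (c : ℕ) :
    (splitFiber A i).reverse.foldl (pmajStep (splitArcs A))
        (σ.map (Prod.map (splitVertex A) (↑)), c) =
      Prod.map (List.map (Prod.map (splitVertex A) (↑))) id (pmajStep A (σ, c) i) := by
  set φ : ℕ × ℕ → ℚ × ℚ := Prod.map (splitVertex A) (↑)
  set τ := σ.filter (fun e => e.1 ≠ i)
  have hdelete : (if i ∈ A.image Prod.fst then [splitVertex A i] else []).foldl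
      (pmajStep (splitArcs A)) (σ.map φ, c) = (τ.map φ, c) := by
    split_ifs with hl
    · rw [List.foldl_cons, List.foldl_nil, splitArcs_eq_image, pmajStep_of_forall_snd_ne]
      · simp only [List.filter_map, φ, τ, Function.comp_def, Prod.map_fst,
          (splitVertex_strictMono A).injective.ne_iff]
      · simp only [mem_image]
        rintro _ ⟨a, ha, rfl⟩
        exact cast_snd_ne_splitVertex ha i
    · have : τ = σ := List.filter_eq_self.2 fun e he => by
        simpa using fun h : e.1 = i => hl (h ▸ mem_image_of_mem _ (hσ e he))
      rw [List.foldl_nil, this]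
  rw [reverse_splitFiber, List.foldl_append, hdelete]
  split_ifs with hr
  · have hfilter : (τ.map φ).filter (fun e => e.1 ≠ (i : ℚ)) =
        (τ.filter (fun e => e.1 ≠ i)).map φ := by
      rw [List.filter_map]
      refine congrArg _ (List.filter_congr fun e he => ?_)
      simp [φ, splitVertex_ne_cast hr, (List.mem_filter.1 he).2]
    rw [List.foldl_cons, List.foldl_nil, ← pmajStep_filter_fst_ne A i σ c, splitArcs_eq_image]
    exact pmajStep_image hA (labelArc_image_prodMap (splitVertex_strictMono A)
      Nat.cast_injective A) (fun e _ => Nat.cast_inj) hfilter c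
  · have hnot : ∀ e ∈ A, e.2 ≠ i := fun e he h => hr (h ▸ mem_image_of_mem _ he)
    rw [List.foldl_nil, pmajStep_of_forall_snd_ne hnot]
    rfl

lemma pmajArcs_splitArcs (hA : Set.InjOn Prod.snd (A : Set (ℕ × ℕ))) :
    pmajArcs (splitArcs A) = pmajArcs A := by
  rw [pmajArcs_eq_foldl, pmajArcs_eq_foldl, sort_arcEndpoints_splitArcs, List.reverse_flatMap]
  exact congrArg Prod.snd <| List.foldl_flatMap_semiconj _ _ _ _ (fun s => ∀ e ∈ s.1, e ∈ A)
    (fun s i hs => forall_mem_pmajStep hs s.2 i)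
    (fun s i hs => foldl_reverse_splitFiber hA i hs s.2) _ ([], 0) (by simp)

end Split

lemma injOn_snd_arcsOf {n : ℕ} (P : Finpartition (Finset.Icc 1 n)) :
    Set.InjOn Prod.snd (arcsOf P : Set (ℕ × ℕ)) := by
  intro e he f hf h2
  simp only [arcsOf, mem_coe, mem_filter] at he hf
  obtain ⟨-, he1, B, hB, heB, heB2, hno⟩ := he
  obtain ⟨-, hf1, C, hC, hfC, hfC2, hno'⟩ := hf
  obtain rfl : B = C := P.eq_of_mem_parts hB hC heB2 (h2 ▸ hfC2)
  rcases lt_trichotomy e.1 f.1 with h | h | h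
  · exact (hno f.1 hfC h (h2 ▸ hf1)).elim
  · exact Prod.ext h h2
  · exact (hno' e.1 heB h (h2 ▸ he1)).elim

theorem split_preserves_cr2_pmaj (n : ℕ) (P : Finpartition (Finset.Icc 1 n)) :
    cr2 (arcsOf P) = cr2 (splitArcs (arcsOf P)) ∧
    pmajArcs (arcsOf P) = pmajArcs (splitArcs (arcsOf P)) := by
  refine ⟨?_, (pmajArcs_splitArcs (injOn_snd_arcsOf P)).symm⟩
  rw [splitArcs_eq_image, cr2_image_prodMap (splitVertex_strictMono _) Nat.strictMono_cast
    fun _ _ => splitVertex_lt_cast_iff]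
end
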